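/- arXiv:2206.10224 — 5 statements merged into one kernel-verified Lean document; each statement's English description precedes it below -/
import Mathlib

section
/- (Pathwise version of Proposition 2.1(3).) Let ‖p‖₀ ≥ 0, [p]₁ ≥ 0 and q ≥ [p]₁ with q > 0. Let x ≥ 0, T > 0, let N̄, L, I : [0,∞) → [0,∞) be non-decreasing right-continuous functions (allowed to jump at 0, with value 0 before time 0), let g : [0,∞) → ℝ be measurable, and let X be a right-continuous function with left limits satisfying X_t = x + ∫₀ᵗ g_s ds − N̄_t − L_t + I_t for all t ∈ [0,T]. Assume 0 ≤ g_s ≤ ‖p‖₀ + [p]₁·max{X_s, 0} for almost every s ∈ [0,T] and X_s ≥ 0 for all s ∈ [0,T]. Then for every t ∈ [0,T]: X_t ≤ x·e^{qt} + ‖p‖₀·(e^{qt} − 1)/q + ∫_{[0,t]} e^{q(t−s)} (dI_s − dL_s), where the last integral is a Lebesgue–Stieltjes integral with respect to the measures induced by I and L. -/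
/-! Since `X ≥ 0` and `[p]₁ ≤ q`, the premium drift is at most `‖p‖₀ + q X`; dropping `N̄ ≥ 0`
gives `X_s ≤ A_s + q ∫_{[0,s]} X` with `A_s = x + ‖p‖₀ s + I_s - L_s`, and Gronwall's lemma in
integral form yields `X_t ≤ A_t + q ∫_{[0,t]} e^{q(t-s)} A_s ds`. Both that Gronwall lemma and the
evaluation of its right-hand side come from one Fubini identity on the triangle `{s ≤ r}`,
`∫_{[a,b]} e^{q(b-s)} f dμ = ∫_{[a,b]} f dμ + q ∫_{[a,b]} e^{q(b-r)} (∫_{[a,r]} f dμ) dr`: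
for `μ = dI` and `f = 1` it turns `I_t + q ∫ e^{q(t-s)} I_s ds` into `∫_{[0,t]} e^{q(t-s)} dI_s`. -/

open MeasureTheory Set Real Filter

theorem integral_Icc_mul_integral_Icc_comm {μ ν : Measure ℝ} [SFinite μ] [SFinite ν]
    {f k : ℝ → ℝ} {a b : ℝ} (hf : IntegrableOn f (Icc a b) μ) (hk : IntegrableOn k (Icc a b) ν) :
    ∫ s in Icc a b, f s * ∫ r in Icc s b, k r ∂ν ∂μ
      = ∫ r in Icc a b, (∫ s in Icc a r, f s ∂μ) * k r ∂ν := by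
  set F : ℝ × ℝ → ℝ := {p | p.1 ≤ p.2}.indicator fun p => f p.1 * k p.2
  have hF : Integrable F ((μ.restrict (Icc a b)).prod (ν.restrict (Icc a b))) :=
    (hf.mul_prod hk).indicator (measurableSet_le measurable_fst measurable_snd)
  have inner_r : ∀ s ∈ Icc a b, ∫ r in Icc a b, F (s, r) ∂ν = f s * ∫ r in Icc s b, k r ∂ν := by
    intro s hs
    have hFs : (fun r => F (s, r)) = (Ici s).indicator fun r => f s * k r := by
      ext r; simp [F, indicator_apply]
    rw [hFs, setIntegral_indicator measurableSet_Ici, ← Ici_inter_Iic, inter_right_comm,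
      Ici_inter_Ici, max_eq_right hs.1, Ici_inter_Iic, integral_const_mul]
  have inner_s : ∀ r ∈ Icc a b, ∫ s in Icc a b, F (s, r) ∂μ = (∫ s in Icc a r, f s ∂μ) * k r := by
    intro r hr
    have hFr : (fun s => F (s, r)) = (Iic r).indicator fun s => f s * k r := by
      ext s; simp [F, indicator_apply]
    rw [hFr, setIntegral_indicator measurableSet_Iic, ← Ici_inter_Iic, inter_assoc,
      Iic_inter_Iic, min_eq_right hr.2, Ici_inter_Iic, integral_mul_const]
  rw [← setIntegral_congr_fun measurableSet_Icc inner_r,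
    integral_integral_swap (f := fun s r => F (s, r)) hF,
    setIntegral_congr_fun measurableSet_Icc inner_s]

theorem integral_Icc_mul_exp (q : ℝ) {s b : ℝ} (hsb : s ≤ b) :
    ∫ r in Icc s b, q * exp (q * (b - r)) = exp (q * (b - s)) - 1 := by
  have hderiv : ∀ r ∈ uIcc s b,
      HasDerivAt (fun r => -exp (q * (b - r))) (q * exp (q * (b - r))) r := fun r _ =>
    (((hasDerivAt_id r).const_sub b).const_mul q).exp.neg.congr_deriv (by simp only [id]; ring)
  rw [integral_Icc_eq_integral_Ioc, ← intervalIntegral.integral_of_le hsb,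
    intervalIntegral.integral_eq_sub_of_hasDerivAt hderiv
      (by apply Continuous.intervalIntegrable; fun_prop)]
  simp only [sub_self, mul_zero, exp_zero]
  ring

theorem integral_Icc_exp_mul {μ : Measure ℝ} [SFinite μ] (q : ℝ) {f : ℝ → ℝ} {a b : ℝ}
    (hf : IntegrableOn f (Icc a b) μ) :
    ∫ s in Icc a b, exp (q * (b - s)) * f s ∂μ
      = ∫ s in Icc a b, f s ∂μ
        + q * ∫ r in Icc a b, exp (q * (b - r)) * ∫ s in Icc a r, f s ∂μ := by
  have hexp : ContinuousOn (fun s => exp (q * (b - s))) (Icc a b) := by fun_prop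
  have hfubini := integral_Icc_mul_integral_Icc_comm (ν := volume)
    (k := fun r => q * exp (q * (b - r))) hf (by apply Continuous.integrableOn_Icc; fun_prop)
  have hleft : ∫ s in Icc a b, f s * (∫ r in Icc s b, q * exp (q * (b - r))) ∂μ
      = ∫ s in Icc a b, (exp (q * (b - s)) * f s - f s) ∂μ :=
    setIntegral_congr_fun measurableSet_Icc fun s hs => by
      rw [integral_Icc_mul_exp q hs.2]
      ring
  rw [hleft, integral_sub (hf.continuousOn_mul hexp isCompact_Icc) hf] at hfubini
  rw [sub_eq_iff_eq_add'.mp hfubini, ← integral_const_mul]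
  congr 1
  exact integral_congr_ae (ae_of_all _ fun r => by ring)

theorem integral_Icc_le_integral_exp_mul_of_le {u A : ℝ → ℝ} {q a b : ℝ}
    (hu : IntegrableOn u (Icc a b)) (hA : IntegrableOn A (Icc a b))
    (h : ∀ s ∈ Icc a b, u s ≤ A s + q * ∫ r in Icc a s, u r) :
    ∫ r in Icc a b, u r ≤ ∫ s in Icc a b, exp (q * (b - s)) * A s := by
  rcases lt_or_ge b a with hba | hab
  · simp [Icc_eq_empty_of_lt hba]
  set V : ℝ → ℝ := fun s => ∫ r in Icc a s, u r
  have hfubini : ∫ s in Icc a b, exp (q * (b - s)) * u s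
      = (∫ r in Icc a b, u r) + q * ∫ r in Icc a b, exp (q * (b - r)) * V r :=
    integral_Icc_exp_mul q hu
  have hV : IntegrableOn V (Icc a b) := by
    have hprim := intervalIntegral.continuousOn_primitive_interval (uIcc_of_le hab ▸ hu)
    rw [uIcc_of_le hab] at hprim
    refine ContinuousOn.integrableOn_Icc (hprim.congr fun s hs => ?_)
    simp only [V]
    rw [intervalIntegral.integral_of_le hs.1, ← integral_Icc_eq_integral_Ioc]
  have hexp : ContinuousOn (fun s => exp (q * (b - s))) (Icc a b) := by fun_prop
  have hmono : ∫ s in Icc a b, exp (q * (b - s)) * u s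
      ≤ ∫ s in Icc a b, exp (q * (b - s)) * (A s + q * V s) :=
    setIntegral_mono_on (hu.continuousOn_mul hexp isCompact_Icc)
      ((hA.add (hV.const_mul q)).continuousOn_mul hexp isCompact_Icc) measurableSet_Icc
      fun s hs => mul_le_mul_of_nonneg_left (h s hs) (exp_pos _).le
  have hsplit : ∫ s in Icc a b, exp (q * (b - s)) * (A s + q * V s)
      = (∫ s in Icc a b, exp (q * (b - s)) * A s)
        + q * ∫ s in Icc a b, exp (q * (b - s)) * V s := by
    simp_rw [mul_add, mul_left_comm _ q]
    rw [integral_add (hA.continuousOn_mul hexp isCompact_Icc)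
      ((hV.continuousOn_mul hexp isCompact_Icc).const_mul q), integral_const_mul]
  -- the terms `q ∫ e^{q(b-r)} V r` of `hfubini` and `hsplit` cancel
  linarith

theorem le_add_mul_integral_exp_mul_of_le {u A : ℝ → ℝ} {q a b : ℝ} (hq : 0 ≤ q) (hab : a ≤ b)
    (hu : IntegrableOn u (Icc a b)) (hA : IntegrableOn A (Icc a b))
    (h : ∀ s ∈ Icc a b, u s ≤ A s + q * ∫ r in Icc a s, u r) :
    u b ≤ A b + q * ∫ s in Icc a b, exp (q * (b - s)) * A s :=
  (h b ⟨hab, le_rfl⟩).trans <| by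
    gcongr A b + q * ?_
    exact integral_Icc_le_integral_exp_mul_of_le hu hA h

theorem Function.leftLim_eq_of_eqOn_Iio {f : ℝ → ℝ} {a c : ℝ} (h : EqOn f (fun _ => c) (Iio a)) :
    Function.leftLim f a = c :=
  leftLim_eq_of_tendsto <|
    tendsto_const_nhds.congr' (EventuallyEq.symm (eventually_nhdsWithin_of_forall h))

theorem StieltjesFunction.integral_Icc_exp (f : StieltjesFunction ℝ) (q : ℝ) {a b : ℝ}
    (hab : a ≤ b) :
    ∫ s in Icc a b, exp (q * (b - s)) ∂f.measure
      = f b - Function.leftLim f a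
        + q * ∫ s in Icc a b, exp (q * (b - s)) * (f s - Function.leftLim f a) := by
  have hmeas : ∀ r, a ≤ r → ∫ _ in Icc a r, (1 : ℝ) ∂f.measure = f r - Function.leftLim f a :=
    fun r har => by
      rw [setIntegral_const, smul_eq_mul, mul_one, measureReal_def, f.measure_Icc,
        ENNReal.toReal_ofReal (sub_nonneg.mpr (f.mono.leftLim_le har))]
  have h1 : IntegrableOn (fun _ => (1 : ℝ)) (Icc a b) f.measure :=
    integrableOn_const (by rw [f.measure_Icc]; exact ENNReal.ofReal_ne_top)
  have hfubini := integral_Icc_exp_mul q h1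
  simp only [mul_one] at hfubini
  rw [hfubini, hmeas b hab, setIntegral_congr_fun measurableSet_Icc fun r hr => by
    rw [hmeas r hr.1]]

theorem add_mul_integral_exp_mul_affine {q t : ℝ} (hq : q ≠ 0) (ht : 0 ≤ t) (x p0 : ℝ) :
    x + p0 * t + q * ∫ s in Icc 0 t, exp (q * (t - s)) * (x + p0 * s)
      = x * exp (q * t) + p0 * (exp (q * t) - 1) / q := by
  have hderiv : ∀ s ∈ uIcc 0 t, HasDerivAt
      (fun s => -exp (q * (t - s)) * (x + p0 * s + p0 / q))
      (q * (exp (q * (t - s)) * (x + p0 * s))) s := by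
    intro s _
    have hexp := (((hasDerivAt_id s).const_sub t).const_mul q).exp.neg
    have hlin := (((hasDerivAt_id s).const_mul p0).const_add x).add_const (p0 / q)
    exact (hexp.mul hlin).congr_deriv (by simp only [id, Pi.neg_apply]; field_simp; ring)
  rw [← integral_const_mul, integral_Icc_eq_integral_Ioc, ← intervalIntegral.integral_of_le ht,
    intervalIntegral.integral_eq_sub_of_hasDerivAt hderiv
      (by apply Continuous.intervalIntegrable; fun_prop)]
  simp only [sub_self, mul_zero, exp_zero, sub_zero]
  field_simp
  ring

theorem add_mul_integral_exp_mul_eq_stieltjes {q t : ℝ} (hq : q ≠ 0) (ht : 0 ≤ t) (x p0 : ℝ)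
    {I L : StieltjesFunction ℝ} (hI0 : ∀ s : ℝ, s < 0 → I s = 0) (hL0 : ∀ s : ℝ, s < 0 → L s = 0) :
    x + p0 * t + (I t - L t) + q * ∫ s in Icc 0 t, exp (q * (t - s)) * (x + p0 * s + (I s - L s))
      = x * exp (q * t) + p0 * (exp (q * t) - 1) / q
        + ((∫ s in Icc 0 t, exp (q * (t - s)) ∂I.measure)
          - ∫ s in Icc 0 t, exp (q * (t - s)) ∂L.measure) := by
  have hexp {f : StieltjesFunction ℝ} :
      IntegrableOn (fun s => exp (q * (t - s)) * f s) (Icc 0 t) :=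
    (f.mono.locallyIntegrable.integrableOn_isCompact isCompact_Icc).continuousOn_mul
      (by fun_prop) isCompact_Icc
  have hdrift : IntegrableOn (fun s => exp (q * (t - s)) * (x + p0 * s)) (Icc 0 t) :=
    Continuous.integrableOn_Icc (by fun_prop)
  have hIL : IntegrableOn (fun s => exp (q * (t - s)) * I s - exp (q * (t - s)) * L s) (Icc 0 t) :=
    hexp.sub hexp
  have hsplit : ∫ s in Icc 0 t, exp (q * (t - s)) * (x + p0 * s + (I s - L s))
      = (∫ s in Icc 0 t, exp (q * (t - s)) * (x + p0 * s))
        + ((∫ s in Icc 0 t, exp (q * (t - s)) * I s)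
          - ∫ s in Icc 0 t, exp (q * (t - s)) * L s) := by
    rw [← integral_sub hexp hexp, ← integral_add hdrift hIL]
    exact integral_congr_ae (ae_of_all _ fun s => by ring)
  have hstieltjes {f : StieltjesFunction ℝ} (hf : ∀ s : ℝ, s < 0 → f s = 0) :
      ∫ s in Icc 0 t, exp (q * (t - s)) ∂f.measure
        = f t + q * ∫ s in Icc 0 t, exp (q * (t - s)) * f s := by
    simpa [Function.leftLim_eq_of_eqOn_Iio hf] using f.integral_Icc_exp q ht
  rw [hsplit, hstieltjes hI0, hstieltjes hL0, ← add_mul_integral_exp_mul_affine hq ht]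
  ring

theorem integrableOn_Icc_of_surplus_eq {x t : ℝ} {g X Nb L I : ℝ → ℝ}
    (hNb : Monotone Nb) (hL : Monotone L) (hI : Monotone I) (ht : 0 ≤ t)
    (hg : IntegrableOn g (Icc 0 t))
    (hX : ∀ s ∈ Icc 0 t, X s = x + (∫ r in (0:ℝ)..s, g r) - Nb s - L s + I s) :
    IntegrableOn X (Icc 0 t) := by
  have hdrift : IntegrableOn (fun s => ∫ r in (0:ℝ)..s, g r) (Icc 0 t) := by
    have hprim := intervalIntegral.continuousOn_primitive_interval (uIcc_of_le ht ▸ hg)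
    rw [uIcc_of_le ht] at hprim
    exact hprim.integrableOn_Icc
  have hmono {f : ℝ → ℝ} (hf : Monotone f) : IntegrableOn f (Icc 0 t) :=
    hf.locallyIntegrable.integrableOn_isCompact isCompact_Icc
  exact (((((integrableOn_const (by simp)).add hdrift).sub (hmono hNb)).sub (hmono hL)).add
    (hmono hI)).congr_fun (fun s hs => (hX s hs).symm) measurableSet_Icc

theorem le_add_mul_integral_of_surplus_eq {p0 P1 q x t : ℝ} {g X Nb L I : ℝ → ℝ} (hq : P1 ≤ q)
    (hNb : ∀ s ∈ Icc 0 t, 0 ≤ Nb s) (hg : IntegrableOn g (Icc 0 t)) (hX : IntegrableOn X (Icc 0 t))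
    (hgbd : ∀ᵐ s ∂(volume.restrict (Icc 0 t)), g s ≤ p0 + P1 * max (X s) 0)
    (hXeq : ∀ s ∈ Icc 0 t, X s = x + (∫ r in (0:ℝ)..s, g r) - Nb s - L s + I s)
    (hXpos : ∀ s ∈ Icc 0 t, 0 ≤ X s) :
    ∀ s ∈ Icc 0 t, X s ≤ x + p0 * s + (I s - L s) + q * ∫ r in Icc 0 s, X r := by
  intro s hs
  have hsub : Icc 0 s ⊆ Icc 0 t := Icc_subset_Icc_right hs.2
  have hdrift : ∫ r in (0:ℝ)..s, g r ≤ p0 * s + q * ∫ r in Icc 0 s, X r := by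
    rw [intervalIntegral.integral_of_le hs.1, ← integral_Icc_eq_integral_Ioc]
    calc ∫ r in Icc 0 s, g r ≤ ∫ r in Icc 0 s, (p0 + q * X r) := by
          refine setIntegral_mono_ae_restrict (hg.mono_set hsub)
            ((integrableOn_const (by simp)).add ((hX.mono_set hsub).const_mul q)) ?_
          filter_upwards [ae_restrict_of_ae_restrict_of_subset hsub hgbd,
            ae_restrict_mem measurableSet_Icc] with r hr hrs
          have hXr := hXpos r (hsub hrs)
          rw [max_eq_left hXr] at hr
          nlinarith
      _ = p0 * s + q * ∫ r in Icc 0 s, X r := by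
          rw [integral_add (integrable_const p0) ((hX.mono_set hsub).const_mul q),
            setIntegral_const, integral_const_mul]
          simp [hs.1, mul_comm]
  linarith [hXeq s hs, hNb s hs]

theorem pathwise_surplus_upper_bound_general
    (p0 P1 q : ℝ) (hq1 : P1 ≤ q) (hq : 0 < q)
    (x T : ℝ)
    (Nb L I : StieltjesFunction ℝ)
    (hNb0 : ∀ t : ℝ, t < 0 → Nb t = 0)
    (hL0 : ∀ t : ℝ, t < 0 → L t = 0)
    (hI0 : ∀ t : ℝ, t < 0 → I t = 0)
    (g : ℝ → ℝ) (hgint : IntegrableOn g (Icc 0 T))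
    (X : ℝ → ℝ)
    (hgbd : ∀ᵐ s ∂(volume.restrict (Icc (0:ℝ) T)), 0 ≤ g s ∧ g s ≤ p0 + P1 * max (X s) 0)
    (hXeq : ∀ t ∈ Icc (0:ℝ) T, X t = x + (∫ s in (0:ℝ)..t, g s) - Nb t - L t + I t)
    (hXpos : ∀ t ∈ Icc (0:ℝ) T, 0 ≤ X t) :
    ∀ t ∈ Icc (0:ℝ) T,
      X t ≤ x * Real.exp (q * t) + p0 * (Real.exp (q * t) - 1) / q
        + ((∫ s in Icc (0:ℝ) t, Real.exp (q * (t - s)) ∂I.measure)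
          - ∫ s in Icc (0:ℝ) t, Real.exp (q * (t - s)) ∂L.measure) := by
  rintro t ⟨ht0, htT⟩
  have hsub : Icc 0 t ⊆ Icc 0 T := Icc_subset_Icc_right htT
  have hXeq' := fun s (hs : s ∈ Icc 0 t) => hXeq s (hsub hs)
  have hg := hgint.mono_set hsub
  have hX := integrableOn_Icc_of_surplus_eq Nb.mono L.mono I.mono ht0 hg hXeq'
  have hNb : ∀ s ∈ Icc 0 t, 0 ≤ Nb s := fun s hs =>
    hNb0 (-1) (by norm_num) ▸ Nb.mono (by linarith [hs.1])
  have hmono {f : StieltjesFunction ℝ} : IntegrableOn f (Icc 0 t) :=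
    f.mono.locallyIntegrable.integrableOn_isCompact isCompact_Icc
  have hA : IntegrableOn (fun s => x + p0 * s + (I s - L s)) (Icc 0 t) :=
    (Continuous.integrableOn_Icc (by fun_prop)).add (hmono.sub hmono)
  rw [← add_mul_integral_exp_mul_eq_stieltjes hq.ne' ht0 x p0 hI0 hL0]
  exact le_add_mul_integral_exp_mul_of_le hq.le ht0 hX hA
    (le_add_mul_integral_of_surplus_eq hq1 hNb hg hX
      ((ae_restrict_of_ae_restrict_of_subset hsub hgbd).mono fun _ hs => hs.2) hXeq'
      (fun s hs => hXpos s (hsub hs)))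

/-- pathwise version of Proposition 2.1(3).  If a surplus path satisfies
`X_t = x + ∫₀ᵗ g_s ds − N̄_t − L_t + I_t` on `[0,T]`, with `0 ≤ g_s ≤ ‖p‖₀ + [p]₁ max{X_s,0}`
a.e. and `X ≥ 0` on `[0,T]`, then
`X_t ≤ x e^{qt} + ‖p‖₀ (e^{qt}−1)/q + ∫_{[0,t]} e^{q(t−s)} (dI_s − dL_s)` for `t ∈ [0,T]`. -/
theorem pathwise_surplus_upper_bound
    (p0 P1 q : ℝ) (hp0 : 0 ≤ p0) (hP1 : 0 ≤ P1) (hq1 : P1 ≤ q) (hq : 0 < q)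
    (x T : ℝ) (hx : 0 ≤ x) (hT : 0 < T)
    (Nb L I : StieltjesFunction ℝ)
    (hNb0 : ∀ t : ℝ, t < 0 → Nb t = 0)
    (hL0 : ∀ t : ℝ, t < 0 → L t = 0)
    (hI0 : ∀ t : ℝ, t < 0 → I t = 0)
    (g : ℝ → ℝ) (hgmeas : Measurable g) (hgint : IntegrableOn g (Icc 0 T))
    (X : ℝ → ℝ)
    (hgbd : ∀ᵐ s ∂(volume.restrict (Icc (0:ℝ) T)), 0 ≤ g s ∧ g s ≤ p0 + P1 * max (X s) 0)
    (hXeq : ∀ t ∈ Icc (0:ℝ) T, X t = x + (∫ s in (0:ℝ)..t, g s) - Nb t - L t + I t)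
    (hXpos : ∀ t ∈ Icc (0:ℝ) T, 0 ≤ X t) :
    ∀ t ∈ Icc (0:ℝ) T,
      X t ≤ x * Real.exp (q * t) + p0 * (Real.exp (q * t) - 1) / q
        + ((∫ s in Icc (0:ℝ) t, Real.exp (q * (t - s)) ∂I.measure)
          - ∫ s in Icc (0:ℝ) t, Real.exp (q * (t - s)) ∂L.measure) :=
  pathwise_surplus_upper_bound_general p0 P1 q hq1 hq x T Nb L I hNb0 hL0 hI0 g hgint X hgbd hXeq
    hXpos
end

section
/- (Pathwise core of Proposition 2.1(5).) Let ‖p‖₀ ≥ 0, [p]₁ ≥ 0 and q ≥ [p]₁ with q > 0. Let x ≥ 0, T > 0, let N̄, L, I : [0,∞) → [0,∞) be non-decreasing right-continuous functions (allowed to jump at 0, with value 0 before time 0), let g : [0,∞) → ℝ be measurable, and let X be a right-continuous function with left limits satisfying X_t = x + ∫₀ᵗ g_s ds − N̄_t − L_t + I_t for all t ∈ [0,T]. Assume 0 ≤ g_s ≤ ‖p‖₀ + [p]₁·max{X_s, 0} for almost every s ∈ [0,T] and X_s ≥ 0 for all s ∈ [0,T]. Then the discounted dividends minus discounted injections satisfy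 ∫_{[0,T]} e^{−qs} dL_s − ∫_{[0,T]} e^{−qs} dI_s ≤ x + ‖p‖₀/q. -/
/-!
Discounting the surplus equation gives the pathwise identity
`e^{-qT} X_T + ∫ e^{-qs} dN̄_s + ∫ e^{-qs} dL_s - ∫ e^{-qs} dI_s
  = x + ∫₀ᵀ e^{-qu} (g_u - q X_u) du`,
obtained by integrating `e^{-q·}` by parts against each Stieltjes measure (Fubini applied
to `e^{-qs} = e^{-qT} + ∫ₛᵀ q e^{-qu} du`) and against the absolutely continuous primitive
of `g`. Since `X ≥ 0` and `[p]₁ ≤ q`, the drift `g - qX` is at most `‖p‖₀`, so the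
right-hand side is at most `x + ‖p‖₀/q`, while `e^{-qT} X_T` and the discounted retained
claims are nonnegative.
-/

open MeasureTheory Set Real Filter

theorem setIntegral_Icc_eq_sub_integral_deriv_mul_measureReal {μ : Measure ℝ}
    [IsFiniteMeasureOnCompacts μ] {φ : ℝ → ℝ} (hφ : ContDiff ℝ 1 φ) (a b : ℝ) :
    ∫ s in Icc a b, φ s ∂μ
      = φ b * μ.real (Icc a b) - ∫ u in Icc a b, deriv φ u * μ.real (Icc a u) := by
  have hφ' : Continuous (deriv φ) := hφ.continuous_deriv le_rfl
  have : IsFiniteMeasure (μ.restrict (Icc a b)) :=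
    isFiniteMeasure_restrict.2 isCompact_Icc.measure_lt_top.ne
  set ν := volume.restrict (Icc a b)
  set F : ℝ × ℝ → ℝ := {p | p.1 ≤ p.2}.indicator fun p => deriv φ p.2
  have hF : Integrable F ((μ.restrict (Icc a b)).prod ν) :=
    ((hφ'.integrableOn_Icc).comp_snd _).indicator
      (measurableSet_le measurable_fst measurable_snd)
  have hinner_u : ∀ s ∈ Icc a b, ∫ u, F (s, u) ∂ν = φ b - φ s := by
    intro s hs
    have hFs : (fun u => F (s, u)) = (Ici s).indicator (deriv φ) := rfl
    have hset : Ici s ∩ Icc a b = Icc s b := by ext; simp; grind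
    rw [hFs, integral_indicator measurableSet_Ici, Measure.restrict_restrict measurableSet_Ici,
      hset, integral_Icc_eq_integral_Ioc, ← intervalIntegral.integral_of_le hs.2,
      intervalIntegral.integral_deriv_eq_sub (fun u _ => hφ.differentiable one_ne_zero u)
        (hφ'.intervalIntegrable _ _)]
  have hinner_s : ∀ u ∈ Icc a b, ∫ s, F (s, u) ∂μ.restrict (Icc a b)
      = deriv φ u * μ.real (Icc a u) := by
    intro u hu
    have hFu : (fun s => F (s, u)) = (Iic u).indicator fun _ => deriv φ u := rfl
    have hset : Iic u ∩ Icc a b = Icc a u := by ext; simp; grind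
    rw [hFu, integral_indicator_const _ measurableSet_Iic,
      measureReal_restrict_apply measurableSet_Iic, hset, smul_eq_mul, mul_comm]
  calc ∫ s in Icc a b, φ s ∂μ = ∫ s in Icc a b, (φ b - ∫ u, F (s, u) ∂ν) ∂μ :=
        setIntegral_congr_fun measurableSet_Icc fun s hs => by rw [hinner_u s hs, sub_sub_cancel]
    _ = φ b * μ.real (Icc a b) - ∫ s in Icc a b, ∫ u, F (s, u) ∂ν ∂μ := by
        rw [integral_sub (integrable_const _) hF.integral_prod_left, setIntegral_const,
          smul_eq_mul, mul_comm]
    _ = φ b * μ.real (Icc a b) - ∫ u in Icc a b, deriv φ u * μ.real (Icc a u) := by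
        rw [integral_integral_swap (f := fun s u => F (s, u)) hF,
          setIntegral_congr_fun measurableSet_Icc hinner_s]

theorem deriv_exp_neg_mul (q : ℝ) :
    deriv (fun u => exp (-q * u)) = fun u => -q * exp (-q * u) := by
  ext u; rw [deriv_exp (by fun_prop)]; simp; ring

theorem integral_mul_exp_neg_mul (q a b : ℝ) :
    ∫ u in a..b, q * exp (-q * u) = exp (-q * a) - exp (-q * b) := by
  have h := intervalIntegral.integral_deriv_eq_sub' (a := a) (b := b) _ (deriv_exp_neg_mul q)
    (fun _ _ => by fun_prop) (by fun_prop)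
  simp only [neg_mul, intervalIntegral.integral_neg] at h ⊢
  linarith

theorem leftLim_eq_of_forall_lt_eq {f : ℝ → ℝ} {a c : ℝ} (h : ∀ t < a, f t = c) :
    Function.leftLim f a = c :=
  leftLim_eq_of_tendsto <| tendsto_const_nhds.congr' <|
    eventually_nhdsWithin_of_forall (s := Iio a) fun t ht => (h t ht).symm

theorem StieltjesFunction.measureReal_Icc (H : StieltjesFunction ℝ) {a b : ℝ} (hab : a ≤ b) :
    H.measure.real (Icc a b) = H b - Function.leftLim H a := by
  rw [measureReal_def, H.measure_Icc, ENNReal.toReal_ofReal (sub_nonneg.2 (H.mono.leftLim_le hab))]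

theorem StieltjesFunction.setIntegral_Icc_eq_sub_integral_deriv_mul (H : StieltjesFunction ℝ)
    {φ : ℝ → ℝ} (hφ : ContDiff ℝ 1 φ) {a b : ℝ} (hab : a ≤ b) :
    ∫ s in Icc a b, φ s ∂H.measure = φ b * (H b - Function.leftLim H a)
      - ∫ u in a..b, deriv φ u * (H u - Function.leftLim H a) := by
  rw [setIntegral_Icc_eq_sub_integral_deriv_mul_measureReal hφ, H.measureReal_Icc hab,
    intervalIntegral.integral_of_le hab, ← integral_Icc_eq_integral_Ioc,
    setIntegral_congr_fun measurableSet_Icc fun u hu => by rw [H.measureReal_Icc hu.1]]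

theorem integral_deriv_mul_primitive {φ g : ℝ → ℝ} {a b : ℝ}
    (hφ : ContDiffOn ℝ 1 φ (uIcc a b)) (hg : IntervalIntegrable g volume a b) :
    ∫ u in a..b, deriv φ u * ∫ v in a..u, g v
      = φ b * (∫ v in a..b, g v) - ∫ u in a..b, φ u * g u := by
  have hG := hg.absolutelyContinuousOnInterval_intervalIntegral left_mem_uIcc
  have hibp := hφ.absolutelyContinuousOnInterval.integral_mul_deriv_eq_deriv_mul hG
  have hderiv :
      ∫ u in a..b, φ u * deriv (fun x => ∫ v in a..x, g v) u = ∫ u in a..b, φ u * g u := by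
    refine intervalIntegral.integral_congr_ae ?_
    filter_upwards [hg.ae_hasDerivAt_integral] with u hu hmem
    rw [(hu (uIoc_subset_uIcc hmem) a left_mem_uIcc).deriv]
  simp only [intervalIntegral.integral_same, mul_zero, sub_zero, hderiv] at hibp
  linarith

theorem integral_exp_neg_mul_mul_le_div {q c T : ℝ} (hq : 0 < q) (hc : 0 ≤ c) (hT : 0 ≤ T)
    {f : ℝ → ℝ} (hf : ∀ᵐ u ∂volume.restrict (Icc 0 T), f u ≤ c) :
    ∫ u in 0..T, exp (-q * u) * f u ≤ c / q := by
  by_cases hint : IntervalIntegrable (fun u => exp (-q * u) * f u) volume 0 T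
  · have hexp : ∫ u in 0..T, exp (-q * u) * c = c * (1 - exp (-q * T)) / q := by
      have h := integral_mul_exp_neg_mul q 0 T
      rw [intervalIntegral.integral_const_mul, mul_zero, exp_zero] at h
      rw [intervalIntegral.integral_mul_const, ← h]
      field_simp
    calc ∫ u in 0..T, exp (-q * u) * f u ≤ ∫ u in 0..T, exp (-q * u) * c :=
          intervalIntegral.integral_mono_ae_restrict hT hint
            (Continuous.intervalIntegrable (by fun_prop) _ _)
            (hf.mono fun u hu => mul_le_mul_of_nonneg_left hu (exp_pos _).le)
      _ = c * (1 - exp (-q * T)) / q := hexp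
      _ ≤ c / q := by
        gcongr ?_ / _
        exact mul_le_of_le_one_right hc (by linarith [exp_pos (-q * T)])
  · rw [intervalIntegral.integral_undef hint]
    positivity

theorem StieltjesFunction.setIntegral_Icc_exp_neg_mul (H : StieltjesFunction ℝ)
    (hH : ∀ t < 0, H t = 0) (q : ℝ) {T : ℝ} (hT : 0 ≤ T) :
    ∫ s in Icc 0 T, exp (-q * s) ∂H.measure
      = exp (-q * T) * H T + ∫ u in 0..T, q * exp (-q * u) * H u := by
  rw [H.setIntegral_Icc_eq_sub_integral_deriv_mul (by fun_prop) hT,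
    leftLim_eq_of_forall_lt_eq hH, deriv_exp_neg_mul]
  simp only [sub_zero, neg_mul, intervalIntegral.integral_neg, sub_neg_eq_add]

theorem integral_mul_exp_neg_mul_mul_primitive (q : ℝ) {g : ℝ → ℝ} {T : ℝ}
    (hg : IntervalIntegrable g volume 0 T) :
    ∫ u in 0..T, q * exp (-q * u) * ∫ s in 0..u, g s
      = (∫ u in 0..T, exp (-q * u) * g u) - exp (-q * T) * ∫ s in 0..T, g s := by
  have h := integral_deriv_mul_primitive (φ := fun u => exp (-q * u)) (by fun_prop) hg
  rw [deriv_exp_neg_mul] at h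
  simp only [neg_mul, intervalIntegral.integral_neg] at h ⊢
  linarith

theorem exp_neg_mul_surplus_add_discounted_controls (q x T : ℝ) (hT : 0 ≤ T)
    (Nb L I : StieltjesFunction ℝ) (hNb0 : ∀ t < 0, Nb t = 0) (hL0 : ∀ t < 0, L t = 0)
    (hI0 : ∀ t < 0, I t = 0) {g X : ℝ → ℝ} (hg : IntervalIntegrable g volume 0 T)
    (hXeq : ∀ t ∈ Icc 0 T, X t = x + (∫ s in 0..t, g s) - Nb t - L t + I t) :
    exp (-q * T) * X T + (∫ s in Icc 0 T, exp (-q * s) ∂Nb.measure)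
      + (∫ s in Icc 0 T, exp (-q * s) ∂L.measure) - ∫ s in Icc 0 T, exp (-q * s) ∂I.measure
      = x + ∫ u in 0..T, exp (-q * u) * (g u - q * X u) := by
  set G : ℝ → ℝ := fun t => ∫ s in 0..t, g s
  have hmono {H : ℝ → ℝ} (hH : Monotone H) :
      IntervalIntegrable (fun u => q * exp (-q * u) * H u) volume 0 T :=
    (hH.intervalIntegrable).continuousOn_mul (by fun_prop)
  have hNbint := hmono Nb.mono
  have hLint := hmono L.mono
  have hIint := hmono I.mono
  have hGint : IntervalIntegrable (fun u => q * exp (-q * u) * G u) volume 0 T :=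
    (intervalIntegral.continuousOn_primitive_interval' hg left_mem_uIcc).intervalIntegrable
      |>.continuousOn_mul (by fun_prop)
  have hgint : IntervalIntegrable (fun u => exp (-q * u) * g u) volume 0 T :=
    hg.continuousOn_mul (by fun_prop)
  have hxint : IntervalIntegrable (fun u => q * exp (-q * u) * x) volume 0 T :=
    Continuous.intervalIntegrable (by fun_prop) _ _
  have hX : ∫ u in 0..T, exp (-q * u) * (g u - q * X u)
      = ∫ u in 0..T, (exp (-q * u) * g u - (q * exp (-q * u) * x + q * exp (-q * u) * G u)
          + (q * exp (-q * u) * Nb u + q * exp (-q * u) * L u - q * exp (-q * u) * I u)) := by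
    refine intervalIntegral.integral_congr fun u hu => ?_
    rw [uIcc_of_le hT] at hu
    simp only [hXeq u hu, G]
    ring
  rw [Nb.setIntegral_Icc_exp_neg_mul hNb0 q hT, L.setIntegral_Icc_exp_neg_mul hL0 q hT,
    I.setIntegral_Icc_exp_neg_mul hI0 q hT, hX,
    intervalIntegral.integral_add (hgint.sub (hxint.add hGint)) ((hNbint.add hLint).sub hIint),
    intervalIntegral.integral_sub hgint (hxint.add hGint),
    intervalIntegral.integral_add hxint hGint,
    intervalIntegral.integral_sub (hNbint.add hLint) hIint,
    intervalIntegral.integral_add hNbint hLint, intervalIntegral.integral_mul_const,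
    integral_mul_exp_neg_mul, integral_mul_exp_neg_mul_mul_primitive q hg, hXeq T ⟨hT, le_rfl⟩]
  simp only [mul_zero, exp_zero]
  ring

theorem discounted_dividends_minus_injections_bound_general
    (p0 P1 q : ℝ) (hp0 : 0 ≤ p0) (hq1 : P1 ≤ q) (hq : 0 < q)
    (x T : ℝ) (hT : 0 < T)
    (Nb L I : StieltjesFunction ℝ)
    (hNb0 : ∀ t : ℝ, t < 0 → Nb t = 0)
    (hL0 : ∀ t : ℝ, t < 0 → L t = 0)
    (hI0 : ∀ t : ℝ, t < 0 → I t = 0)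
    (g : ℝ → ℝ) (hgint : IntegrableOn g (Icc 0 T))
    (X : ℝ → ℝ)
    (hgbd : ∀ᵐ s ∂(volume.restrict (Icc (0:ℝ) T)), 0 ≤ g s ∧ g s ≤ p0 + P1 * max (X s) 0)
    (hXeq : ∀ t ∈ Icc (0:ℝ) T, X t = x + (∫ s in (0:ℝ)..t, g s) - Nb t - L t + I t)
    (hXpos : ∀ t ∈ Icc (0:ℝ) T, 0 ≤ X t) :
    ((∫ s in Icc (0:ℝ) T, Real.exp (-q * s) ∂L.measure)
      - ∫ s in Icc (0:ℝ) T, Real.exp (-q * s) ∂I.measure) ≤ x + p0 / q := by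
  have hidentity := exp_neg_mul_surplus_add_discounted_controls q x T hT.le Nb L I hNb0 hL0 hI0
    ((intervalIntegrable_iff_integrableOn_Icc_of_le hT.le).2 hgint) hXeq
  have hdrift : ∫ u in 0..T, exp (-q * u) * (g u - q * X u) ≤ p0 / q := by
    refine integral_exp_neg_mul_mul_le_div hq hp0 hT.le ?_
    filter_upwards [hgbd, ae_restrict_mem measurableSet_Icc] with u hgu hu
    rw [max_eq_left (hXpos u hu)] at hgu
    nlinarith [hXpos u hu]
  have hNb : 0 ≤ ∫ s in Icc 0 T, exp (-q * s) ∂Nb.measure :=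
    integral_nonneg fun _ => (exp_pos _).le
  have hXT : 0 ≤ exp (-q * T) * X T := mul_nonneg (exp_pos _).le (hXpos T ⟨hT.le, le_rfl⟩)
  linarith

/-- pathwise core of Proposition 2.1(5).  If a surplus path satisfies
`X_t = x + ∫₀ᵗ g_s ds − N̄_t − L_t + I_t` on `[0,T]`, with `0 ≤ g_s ≤ ‖p‖₀ + [p]₁ max{X_s,0}`
a.e. and `X ≥ 0` on `[0,T]`, then the discounted dividends minus discounted injections
satisfy `∫_{[0,T]} e^{−qs} dL_s − ∫_{[0,T]} e^{−qs} dI_s ≤ x + ‖p‖₀/q`. -/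
theorem discounted_dividends_minus_injections_bound
    (p0 P1 q : ℝ) (hp0 : 0 ≤ p0) (hP1 : 0 ≤ P1) (hq1 : P1 ≤ q) (hq : 0 < q)
    (x T : ℝ) (hx : 0 ≤ x) (hT : 0 < T)
    (Nb L I : StieltjesFunction ℝ)
    (hNb0 : ∀ t : ℝ, t < 0 → Nb t = 0)
    (hL0 : ∀ t : ℝ, t < 0 → L t = 0)
    (hI0 : ∀ t : ℝ, t < 0 → I t = 0)
    (g : ℝ → ℝ) (hgmeas : Measurable g) (hgint : IntegrableOn g (Icc 0 T))
    (X : ℝ → ℝ)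
    (hgbd : ∀ᵐ s ∂(volume.restrict (Icc (0:ℝ) T)), 0 ≤ g s ∧ g s ≤ p0 + P1 * max (X s) 0)
    (hXeq : ∀ t ∈ Icc (0:ℝ) T, X t = x + (∫ s in (0:ℝ)..t, g s) - Nb t - L t + I t)
    (hXpos : ∀ t ∈ Icc (0:ℝ) T, 0 ≤ X t) :
    ((∫ s in Icc (0:ℝ) T, Real.exp (-q * s) ∂L.measure)
      - ∫ s in Icc (0:ℝ) T, Real.exp (-q * s) ∂I.measure) ≤ x + p0 / q :=
  discounted_dividends_minus_injections_bound_general p0 P1 q hp0 hq1 hq x T hT Nb L I hNb0 hL0 hI0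
    g hgint X hgbd hXeq hXpos
end

section
/- (Estimate (EstimLu) in the proof of Proposition 3.2.) Assume [A1], [A2], λ > 0, q > 0 and k ≥ 1. Let x₀ < 0 and let φ : ℝ → [0,∞) be absolutely continuous with: φ(x) = 0 for all x ≤ x₀; φ'(x) ≤ k for almost every x ∈ ℝ and 1 ≤ φ'(x) for almost every x > x₀; φ of linear growth; and for almost every x ≥ 0 and every u ∈ 𝓡, 𝓛^u φ(x) ≤ 0. Let ρ : ℝ → [0,∞) be C¹, supported in (0,1), with ∫ρ = 1, and set ψ_n(x) := ∫₀^{1/n} φ(x+s)·n·ρ(ns) ds for n ≥ 1. Then each ψ_n is C¹, φ(x) ≤ ψ_n(x) ≤ φ(x) + k/n for all x ∈ ℝ, and for every x ≥ 0, every u ∈ 𝓡 and every n ≥ 1: 𝓛^u ψ_n(x) ≤ (1 + k(3λ + 2q))/n. -/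
open MeasureTheory Set Real Filter

noncomputable section

/-- A retention (reinsurance) policy: a Borel measurable function `u` with
`0 ≤ u y ≤ y` for all `y ≥ 0`. -/
def IsRetention (u : ℝ → ℝ) : Prop :=
  Measurable u ∧ ∀ y : ℝ, 0 ≤ y → 0 ≤ u y ∧ u y ≤ y

/-- The inner supremum `sup_{0 ≤ y ≤ z} |p(y,x) − p(y,x')|` appearing in `[p]₁`. -/
def supDiff (p : ℝ → ℝ → ℝ) (x x' z : ℝ) : ℝ :=
  sSup ((fun y => |p y x - p y x'|) '' Icc 0 z)

/-- Assumption [A1]: `p ≥ 0` and `p` is non-decreasing in each argument on `[0,∞)`. -/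
def AssumptionA1 (p : ℝ → ℝ → ℝ) : Prop :=
  (∀ y x : ℝ, 0 ≤ y → 0 ≤ x → 0 ≤ p y x) ∧
  (∀ x : ℝ, 0 ≤ x → MonotoneOn (fun y => p y x) (Ici 0)) ∧
  (∀ y : ℝ, 0 ≤ y → MonotoneOn (fun x => p y x) (Ici 0))

/-- Assumption [A2], with the real constant `P1` standing for the finite quantity `[p]₁`:
`p` is (jointly) measurable, uniformly continuous on `[0,∞)²`,
`‖p‖₀ = ∫ p(y,0) dF(y)` is finite, and the defining bound of `[p]₁` holds. -/
def AssumptionA2 (F : Measure ℝ) (p : ℝ → ℝ → ℝ) (P1 : ℝ) : Prop :=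
  Measurable (fun z : ℝ × ℝ => p z.1 z.2) ∧
  UniformContinuousOn (fun z : ℝ × ℝ => p z.1 z.2) (Ici 0 ×ˢ Ici 0) ∧
  Integrable (fun y => p y 0) F ∧
  0 ≤ P1 ∧
  (∀ x x' : ℝ, 0 ≤ x → 0 ≤ x' → Integrable (fun z => supDiff p x x' z) F) ∧
  (∀ x x' : ℝ, 0 ≤ x → 0 ≤ x' → (∫ z, supDiff p x x' z ∂F) ≤ P1 * |x - x'|)

/-- The generator `𝓛^u ψ(x) = p^u(x) ψ'(x) + λ ∫ ψ(x − u(y)) dF(y) − (λ+q) ψ(x)`,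
where `ψ'` denotes an (a.e.) derivative of `ψ`. -/
def gen (F : MeasureTheory.Measure ℝ) (p : ℝ → ℝ → ℝ) (lam q : ℝ) (u : ℝ → ℝ)
    (ψ ψ' : ℝ → ℝ) (x : ℝ) : ℝ :=
  (∫ y, p (u y) x ∂F) * ψ' x + lam * (∫ y, ψ (x - u y) ∂F) - (lam + q) * ψ x

/-- The right-mollification `ψ_n(x) = ∫₀^{1/n} φ(x+s) n ρ(ns) ds`. -/
def mollify (φ ρ : ℝ → ℝ) (n : ℕ) (x : ℝ) : ℝ :=
  ∫ s in Ioo (0:ℝ) (1 / (n : ℝ)), φ (x + s) * ((n : ℝ) * ρ ((n : ℝ) * s))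

/-!
Write `ψ_n(x) = ∫ φ(x + s) ρ_n(s) ds` with `ρ_n(s) = n ρ(n s)` supported in `(0, 1/n)`.
Absolute continuity of `φ` and Fubini give `ψ_n' = ∫ φ'(· + s) ρ_n(s) ds`, a convolution of a
locally integrable function with a continuous compactly supported kernel, hence continuous.
As `φ` is nondecreasing with `φ' ≤ k`, every value `φ(x + s)`, `0 < s < 1/n`, lies in
`[φ x, φ x + k/n]`, and so does their average `ψ_n(x)`.
With the premium frozen at `x` the generator is translation invariant, so `𝓛^u ψ_n(x)` is the
`ρ_n`-average over `s` of the frozen generator applied to `φ` at `x + s`. The premium is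
nondecreasing in the surplus and `φ' ≥ 0` there, so each of these is at most `𝓛^u φ(x + s) ≤ 0`:
in fact `𝓛^u ψ_n(x) ≤ 0`.
-/

open Function

section Primitive

variable {φ f : ℝ → ℝ}

theorem locallyIntegrable_of_forall_intervalIntegrable
    (hf : ∀ a b, IntervalIntegrable f volume a b) : LocallyIntegrable f volume :=
  fun x => ⟨Ioc (x - 1) (x + 1), Ioc_mem_nhds (by linarith) (by linarith), (hf _ _).1⟩

theorem continuous_of_sub_eq_intervalIntegral (hf : ∀ a b, IntervalIntegrable f volume a b)
    (hφ : ∀ a b, φ b - φ a = ∫ t in a..b, f t) : Continuous φ := by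
  have hrepr : φ = fun b => φ 0 + ∫ t in (0:ℝ)..b, f t := by
    funext b; linarith [hφ 0 b]
  rw [hrepr]
  exact continuous_const.add (intervalIntegral.continuous_primitive hf 0)

theorem sub_le_mul_of_sub_eq_intervalIntegral (hf : ∀ a b, IntervalIntegrable f volume a b)
    (hφ : ∀ a b, φ b - φ a = ∫ t in a..b, f t) {k : ℝ} (hk : ∀ᵐ t, f t ≤ k) {a b : ℝ}
    (hab : a ≤ b) : φ b - φ a ≤ k * (b - a) := by
  have := intervalIntegral.integral_mono_ae hab (hf a b) intervalIntegrable_const hk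
  rw [intervalIntegral.integral_const, smul_eq_mul] at this
  linarith [hφ a b]

theorem monotoneOn_Ici_of_sub_eq_intervalIntegral (hφ : ∀ a b, φ b - φ a = ∫ t in a..b, f t)
    {c : ℝ} (hc : ∀ᵐ t, c < t → 0 ≤ f t) : MonotoneOn φ (Ici c) := by
  intro a ha b _ hab
  have hnonneg : 0 ≤ ∫ t in a..b, f t := by
    rw [intervalIntegral.integral_of_le hab]
    refine setIntegral_nonneg_ae measurableSet_Ioc ?_
    filter_upwards [hc] with t hct ht using hct (lt_of_le_of_lt (mem_Ici.1 ha) ht.1)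
  linarith [hφ a b]

end Primitive

theorem MeasureTheory.LocallyIntegrable.comp_add_left {f : ℝ → ℝ}
    (hf : LocallyIntegrable f volume) (x : ℝ) : LocallyIntegrable (fun s => f (x + s)) volume :=
  (locallyIntegrable_map_homeomorph (Homeomorph.addLeft x)).1
    (by simpa [map_add_left_eq_self] using hf)

def shiftConv (w f : ℝ → ℝ) (x : ℝ) : ℝ := ∫ s, f (x + s) * w s

section ShiftConv

variable {w φ f : ℝ → ℝ}

theorem integrable_shift_mul (hw : Continuous w) (hws : HasCompactSupport w)
    (hf : LocallyIntegrable f volume) (x : ℝ) : Integrable (fun s => f (x + s) * w s) volume := by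
  simpa only [smul_eq_mul, mul_comm] using
    (hf.comp_add_left x).integrable_smul_left_of_hasCompactSupport hw hws

theorem shiftConv_eq_convolution :
    shiftConv w f = MeasureTheory.convolution (fun t => w (-t)) f
      (ContinuousLinearMap.mul ℝ ℝ) volume := by
  funext x
  rw [convolution_def, shiftConv, ← integral_neg_eq_self]
  simp [sub_eq_add_neg, mul_comm]

theorem continuous_shiftConv (hw : Continuous w) (hws : HasCompactSupport w)
    (hf : LocallyIntegrable f volume) : Continuous (shiftConv w f) := by
  rw [shiftConv_eq_convolution]
  exact hws.comp_homeomorph (Homeomorph.neg ℝ) |>.continuous_convolution_left _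
    (hw.comp continuous_neg) hf

theorem continuous_intervalIntegral_norm_shift (hf : ∀ a b, IntervalIntegrable f volume a b)
    (a b : ℝ) : Continuous fun s => ∫ t in (a + s)..(b + s), ‖f t‖ := by
  have hprim := intervalIntegral.continuous_primitive (fun a b => (hf a b).norm) 0
  have heq : (fun s => ∫ t in (a + s)..(b + s), ‖f t‖) =
      fun s => (∫ t in (0:ℝ)..(b + s), ‖f t‖) - ∫ t in (0:ℝ)..(a + s), ‖f t‖ := by
    funext s
    rw [intervalIntegral.integral_interval_sub_left (hf 0 _).norm (hf 0 _).norm]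
  rw [heq]
  exact (hprim.comp (continuous_const.add continuous_id)).sub
    (hprim.comp (continuous_const.add continuous_id))

theorem integrable_uncurry_shift_mul (hw : Continuous w) (hws : HasCompactSupport w)
    (hf : ∀ a b, IntervalIntegrable f volume a b) (a b : ℝ) :
    Integrable (uncurry fun t s => f (t + s) * w s)
      ((volume.restrict (uIoc a b)).prod volume) := by
  have hmeas : AEStronglyMeasurable (uncurry fun t s => f (t + s) * w s)
      ((volume.restrict (uIoc a b)).prod volume) :=
    ((locallyIntegrable_of_forall_intervalIntegrable hf).aestronglyMeasurable
      |>.comp_quasiMeasurePreserving (quasiMeasurePreserving_add _ _)).mul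
      (hw.comp continuous_snd).aestronglyMeasurable
  have hnorm : ∀ s, ∫ t in uIoc a b, ‖f (t + s) * w s‖ =
      ‖w s‖ * ‖∫ t in (a + s)..(b + s), ‖f t‖‖ := by
    intro s
    simp_rw [norm_mul, mul_comm ‖f _‖]
    rw [integral_const_mul, ← intervalIntegral.integral_comp_add_right (fun t => ‖f t‖),
      intervalIntegral.norm_integral_eq_norm_integral_uIoc, Real.norm_of_nonneg
        (setIntegral_nonneg_of_ae (ae_of_all _ fun _ => norm_nonneg _))]
  rw [integrable_prod_iff' hmeas]
  refine ⟨ae_of_all _ fun s => ?_, ?_⟩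
  · simp only [uncurry_apply_pair]
    have := (hf (a + s) (b + s)).comp_add_right s
    rw [add_sub_cancel_right, add_sub_cancel_right, intervalIntegrable_iff] at this
    exact this.mul_const _
  · simp_rw [uncurry_apply_pair, hnorm]
    exact (hw.norm.mul (continuous_intervalIntegral_norm_shift hf a b).norm
      ).integrable_of_hasCompactSupport hws.norm.mul_right

theorem shiftConv_sub_eq_intervalIntegral (hw : Continuous w) (hws : HasCompactSupport w)
    (hf : ∀ a b, IntervalIntegrable f volume a b) (hφ : ∀ a b, φ b - φ a = ∫ t in a..b, f t)
    (a b : ℝ) : shiftConv w φ b - shiftConv w φ a = ∫ t in a..b, shiftConv w f t := by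
  have hφl := (continuous_of_sub_eq_intervalIntegral hf hφ).locallyIntegrable (μ := volume)
  calc shiftConv w φ b - shiftConv w φ a = ∫ s, (φ (b + s) - φ (a + s)) * w s := by
        rw [shiftConv, shiftConv, ← integral_sub (integrable_shift_mul hw hws hφl b)
          (integrable_shift_mul hw hws hφl a)]
        simp_rw [sub_mul]
    _ = ∫ s, ∫ t in a..b, f (t + s) * w s := by
        simp_rw [hφ, intervalIntegral.integral_mul_const,
          intervalIntegral.integral_comp_add_right]
    _ = ∫ t in a..b, shiftConv w f t :=
        (intervalIntegral_integral_swap (integrable_uncurry_shift_mul hw hws hf a b)).symm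

theorem hasDerivAt_shiftConv (hw : Continuous w) (hws : HasCompactSupport w)
    (hf : ∀ a b, IntervalIntegrable f volume a b) (hφ : ∀ a b, φ b - φ a = ∫ t in a..b, f t)
    (x : ℝ) : HasDerivAt (shiftConv w φ) (shiftConv w f x) x := by
  have heq : shiftConv w φ = fun b => shiftConv w φ 0 + ∫ t in (0:ℝ)..b, shiftConv w f t :=
    funext fun b => by linarith [shiftConv_sub_eq_intervalIntegral hw hws hf hφ 0 b]
  rw [heq]
  exact ((continuous_shiftConv hw hws (locallyIntegrable_of_forall_intervalIntegrable hf)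
    ).integral_hasStrictDerivAt 0 x).hasDerivAt.const_add _

theorem deriv_shiftConv (hw : Continuous w) (hws : HasCompactSupport w)
    (hf : ∀ a b, IntervalIntegrable f volume a b) (hφ : ∀ a b, φ b - φ a = ∫ t in a..b, f t) :
    deriv (shiftConv w φ) = shiftConv w f :=
  funext fun x => (hasDerivAt_shiftConv hw hws hf hφ x).deriv

theorem contDiff_one_shiftConv (hw : Continuous w) (hws : HasCompactSupport w)
    (hf : ∀ a b, IntervalIntegrable f volume a b) (hφ : ∀ a b, φ b - φ a = ∫ t in a..b, f t) :
    ContDiff ℝ 1 (shiftConv w φ) := by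
  rw [contDiff_one_iff_deriv, deriv_shiftConv hw hws hf hφ]
  exact ⟨fun x => (hasDerivAt_shiftConv hw hws hf hφ x).differentiableAt,
    continuous_shiftConv hw hws (locallyIntegrable_of_forall_intervalIntegrable hf)⟩

end ShiftConv

def IsRightMollifier (w : ℝ → ℝ) (δ : ℝ) : Prop :=
  Continuous w ∧ 0 ≤ w ∧ support w ⊆ Ioo 0 δ ∧ ∫ s, w s = 1

namespace IsRightMollifier

variable {w φ : ℝ → ℝ} {δ : ℝ}

theorem hasCompactSupport (hw : IsRightMollifier w δ) : HasCompactSupport w :=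
  HasCompactSupport.intro isCompact_Icc fun _ hs =>
    notMem_support.1 fun h => hs (Ioo_subset_Icc_self (hw.2.2.1 h))

theorem rescale (hw : IsRightMollifier w 1) {c : ℝ} (hc : 0 < c) :
    IsRightMollifier (fun s => c * w (c * s)) (1 / c) := by
  obtain ⟨hwc, hw0, hws, hw1⟩ := hw
  refine ⟨continuous_const.mul (hwc.comp (continuous_const_mul c)),
    fun s => mul_nonneg hc.le (hw0 _), fun s hs => ?_, ?_⟩
  · obtain ⟨h0, h1⟩ := hws (right_ne_zero_of_mul hs)
    exact ⟨pos_of_mul_pos_right h0 hc.le, by rw [lt_div_iff₀ hc]; linarith⟩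
  · rw [integral_const_mul, Measure.integral_comp_mul_left, abs_of_pos (inv_pos.2 hc),
      smul_eq_mul, mul_inv_cancel_left₀ hc.ne', hw1]

theorem le_shiftConv (hw : IsRightMollifier w δ) (hφ : Continuous φ) {a x : ℝ}
    (h : ∀ s ∈ Ioo 0 δ, a ≤ φ (x + s)) : a ≤ shiftConv w φ x := by
  calc a = ∫ s, a * w s := by rw [integral_const_mul, hw.2.2.2, mul_one]
    _ ≤ shiftConv w φ x := by
      refine integral_mono ((hw.1.integrable_of_hasCompactSupport hw.hasCompactSupport).const_mul a)
        (integrable_shift_mul hw.1 hw.hasCompactSupport hφ.locallyIntegrable x) fun s => ?_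
      by_cases hs : w s = 0
      · simp [hs]
      · exact mul_le_mul_of_nonneg_right (h s (hw.2.2.1 hs)) (hw.2.1 s)

theorem shiftConv_le (hw : IsRightMollifier w δ) (hφ : Continuous φ) {b x : ℝ}
    (h : ∀ s ∈ Ioo 0 δ, φ (x + s) ≤ b) : shiftConv w φ x ≤ b := by
  calc shiftConv w φ x ≤ ∫ s, b * w s := by
        refine integral_mono (integrable_shift_mul hw.1 hw.hasCompactSupport hφ.locallyIntegrable x)
          ((hw.1.integrable_of_hasCompactSupport hw.hasCompactSupport).const_mul b) fun s => ?_
        by_cases hs : w s = 0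
        · simp [hs]
        · exact mul_le_mul_of_nonneg_right (h s (hw.2.2.1 hs)) (hw.2.1 s)
    _ = b := by rw [integral_const_mul, hw.2.2.2, mul_one]

end IsRightMollifier

theorem mollify_eq_shiftConv (φ : ℝ → ℝ) {ρ : ℝ → ℝ} (hρ : IsRightMollifier ρ 1) {n : ℕ}
    (hn : 0 < n) : mollify φ ρ n = shiftConv (fun s => n * ρ (n * s)) φ := by
  funext x
  refine setIntegral_eq_integral_of_forall_compl_eq_zero fun s hs => ?_
  rw [notMem_support.1 fun h => hs ((hρ.rescale (by exact_mod_cast hn)).2.2.1 h), mul_zero]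

section Generator

variable {F : Measure ℝ} {lam q : ℝ} {p : ℝ → ℝ → ℝ} {u w φ f : ℝ → ℝ}

theorem integrable_prod_shift_sub_mul [IsFiniteMeasure F] (hu : Measurable u)
    (hu0 : ∀ᵐ y ∂F, 0 ≤ u y) (hw : Continuous w) (hws : HasCompactSupport w)
    (hφ : Continuous φ) (hφm : Monotone φ) (hφ0 : 0 ≤ φ) (x : ℝ) :
    Integrable (uncurry fun y s => φ (x + s - u y) * w s) (F.prod volume) := by
  have hdom : Integrable (fun z : ℝ × ℝ => 1 * (φ (x + z.2) * ‖w z.2‖)) (F.prod volume) :=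
    (integrable_const 1).mul_prod (integrable_shift_mul hw.norm hws.norm hφ.locallyIntegrable x)
  refine hdom.mono' ?_ ?_
  · exact ((hφ.measurable.comp (measurable_const.add measurable_snd |>.sub
      (hu.comp measurable_fst))).mul (hw.measurable.comp measurable_snd)).aestronglyMeasurable
  · filter_upwards [Measure.quasiMeasurePreserving_fst.ae hu0] with z hz
    rw [uncurry_apply_pair, one_mul, norm_mul, Real.norm_of_nonneg (hφ0 _)]
    exact mul_le_mul_of_nonneg_right (hφm (by linarith)) (norm_nonneg _)

theorem gen_const_premium_shiftConv [IsFiniteMeasure F] (c : ℝ → ℝ) (hu : Measurable u)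
    (hu0 : ∀ᵐ y ∂F, 0 ≤ u y) (hw : Continuous w) (hws : HasCompactSupport w)
    (hφ : Continuous φ) (hφm : Monotone φ) (hφ0 : 0 ≤ φ) (hf : LocallyIntegrable f volume)
    (x : ℝ) :
    gen F (fun y _ => c y) lam q u (shiftConv w φ) (shiftConv w f) x =
      shiftConv w (gen F (fun y _ => c y) lam q u φ f) x := by
  have hint := integrable_prod_shift_sub_mul hu hu0 hw hws hφ hφm hφ0 x
  have hclaim : ∫ y, shiftConv w φ (x - u y) ∂F = ∫ s, (∫ y, φ (x + s - u y) ∂F) * w s := by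
    simp_rw [shiftConv, sub_add_eq_add_sub, ← integral_mul_const]
    exact integral_integral_swap hint
  have hmid : Integrable (fun s => (∫ y, φ (x + s - u y) ∂F) * w s) volume := by
    simpa only [uncurry_apply_pair, integral_mul_const] using hint.integral_prod_right
  have hφw := integrable_shift_mul hw hws hφ.locallyIntegrable x
  have hfw := integrable_shift_mul hw hws hf x
  have hexpand : (fun s => gen F (fun y _ => c y) lam q u φ f (x + s) * w s) = fun s =>
      (∫ y, c (u y) ∂F) * (f (x + s) * w s) + lam * ((∫ y, φ (x + s - u y) ∂F) * w s)
        - (lam + q) * (φ (x + s) * w s) := by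
    funext s
    simp only [gen]
    ring
  have hsum : Integrable (fun s => (∫ y, c (u y) ∂F) * (f (x + s) * w s)
      + lam * ((∫ y, φ (x + s - u y) ∂F) * w s)) volume :=
    (hfw.const_mul _).add (hmid.const_mul _)
  rw [gen, hclaim, shiftConv, shiftConv, shiftConv, hexpand, integral_sub hsum (hφw.const_mul _),
    integral_add (hfw.const_mul _) (hmid.const_mul _), integral_const_mul, integral_const_mul,
    integral_const_mul]

theorem gen_shiftConv_nonpos [IsFiniteMeasure F] (hu : Measurable u) (hu0 : ∀ᵐ y ∂F, 0 ≤ u y)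
    (hw : Continuous w) (hws : HasCompactSupport w) (hw0 : 0 ≤ w) (hwpos : support w ⊆ Ioi 0)
    (hφ : Continuous φ) (hφm : Monotone φ) (hφ0 : 0 ≤ φ) (hf : LocallyIntegrable f volume)
    {x : ℝ} (hpx : MonotoneOn (fun t => ∫ y, p (u y) t ∂F) (Ici x))
    (hf0 : ∀ᵐ t, x < t → 0 ≤ f t) (hgen : ∀ᵐ t, x < t → gen F p lam q u φ f t ≤ 0) :
    gen F p lam q u (shiftConv w φ) (shiftConv w f) x ≤ 0 := by
  have hshift : ∀ {P : ℝ → Prop}, (∀ᵐ t, P t) → ∀ᵐ s, P (x + s) := fun h =>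
    (measurePreserving_add_left volume x).quasiMeasurePreserving.ae h
  -- freezing the premium at `x` makes the generator commute with `shiftConv w`
  change gen F (fun y _ => p y x) lam q u (shiftConv w φ) (shiftConv w f) x ≤ 0
  rw [gen_const_premium_shiftConv _ hu hu0 hw hws hφ hφm hφ0 hf]
  refine integral_nonpos_of_ae ?_
  filter_upwards [hshift hf0, hshift hgen] with s hfs hgs
  by_cases hs : w s = 0
  · simp [hs]
  have hxs : x < x + s := lt_add_of_pos_right x (hwpos hs)
  have hpremium := mul_le_mul_of_nonneg_right (hpx self_mem_Ici hxs.le hxs.le) (hfs hxs)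
  refine mul_nonpos_of_nonpos_of_nonneg ?_ (hw0 s)
  simp only [gen] at hgs ⊢
  linarith [hgs hxs]

end Generator

section Premium

variable {F : Measure ℝ} {p : ℝ → ℝ → ℝ} {P1 : ℝ} {u : ℝ → ℝ}

theorem abs_sub_le_supDiff (hp : ContinuousOn (fun z : ℝ × ℝ => p z.1 z.2) (Ici 0 ×ˢ Ici 0))
    {x x' v z : ℝ} (hx : 0 ≤ x) (hx' : 0 ≤ x') (hv : v ∈ Icc 0 z) :
    |p v x - p v x'| ≤ supDiff p x x' z := by
  have hsection : ∀ t, 0 ≤ t → ContinuousOn (fun y => p y t) (Icc 0 z) := fun t ht =>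
    hp.comp (continuousOn_id.prodMk continuousOn_const) fun y hy => ⟨hy.1, ht⟩
  exact le_csSup (isCompact_Icc.bddAbove_image ((hsection x hx).sub (hsection x' hx')).abs)
    ⟨v, hv, rfl⟩

theorem integrable_premium (hA1 : AssumptionA1 p) (hA2 : AssumptionA2 F p P1)
    (hF : ∀ᵐ y ∂F, 0 ≤ y) (hu : IsRetention u) {t : ℝ} (ht : 0 ≤ t) :
    Integrable (fun y => p (u y) t) F := by
  obtain ⟨hp0, hpy, -⟩ := hA1
  obtain ⟨hpm, hpc, hp0i, -, hsupi, -⟩ := hA2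
  refine (hp0i.add (hsupi t 0 ht le_rfl)).mono'
    (hpm.comp (hu.1.prodMk measurable_const)).aestronglyMeasurable ?_
  filter_upwards [hF] with y hy
  obtain ⟨huy0, huy⟩ := hu.2 y hy
  have hdiff := (abs_le.1 (abs_sub_le_supDiff hpc.continuousOn ht le_rfl ⟨huy0, huy⟩)).2
  have hmono : p (u y) 0 ≤ p y 0 := hpy 0 le_rfl huy0 (huy0.trans huy) huy
  rw [Real.norm_of_nonneg (hp0 _ _ huy0 ht)]
  simp only [Pi.add_apply]
  linarith

theorem monotoneOn_premium (hA1 : AssumptionA1 p) (hA2 : AssumptionA2 F p P1)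
    (hF : ∀ᵐ y ∂F, 0 ≤ y) (hu : IsRetention u) :
    MonotoneOn (fun t => ∫ y, p (u y) t ∂F) (Ici 0) := fun a ha b hb hab =>
  integral_mono_ae (integrable_premium hA1 hA2 hF hu ha) (integrable_premium hA1 hA2 hF hu hb)
    (by filter_upwards [hF] with y hy using hA1.2.2 (u y) (hu.2 y hy).1 ha hb hab)

end Premium

theorem mollified_supersolution_generator_estimate_general
    (F : Measure ℝ) [IsProbabilityMeasure F] (hF : F (Iio 0) = 0)
    (p : ℝ → ℝ → ℝ) (P1 : ℝ) (hA1 : AssumptionA1 p) (hA2 : AssumptionA2 F p P1)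
    (lam q k : ℝ) (hlam : 0 < lam) (hq : 0 < q) (hk : 1 ≤ k)
    (x₀ : ℝ) (hx₀ : x₀ < 0)
    (φ φ' : ℝ → ℝ)
    (hzero : ∀ x : ℝ, x ≤ x₀ → φ x = 0)
    (hpos : ∀ x : ℝ, 0 ≤ φ x)
    (hloc : ∀ a b : ℝ, IntervalIntegrable φ' volume a b)
    (hAC : ∀ a b : ℝ, φ b - φ a = ∫ t in a..b, φ' t)
    (hub : ∀ᵐ x : ℝ ∂volume, φ' x ≤ k)
    (hlb : ∀ᵐ x : ℝ ∂volume, x₀ < x → 1 ≤ φ' x)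
    (hgen : ∀ᵐ x : ℝ ∂volume, 0 ≤ x → ∀ u : ℝ → ℝ, IsRetention u →
      gen F p lam q u φ φ' x ≤ 0)
    (ρ : ℝ → ℝ) (hρC1 : ContDiff ℝ 1 ρ) (hρ0 : ∀ s : ℝ, 0 ≤ ρ s)
    (hρsupp : Function.support ρ ⊆ Ioo 0 1) (hρint : (∫ s, ρ s) = 1) :
    ∀ n : ℕ, 1 ≤ n →
      ContDiff ℝ 1 (mollify φ ρ n) ∧
      (∀ x : ℝ, φ x ≤ mollify φ ρ n x ∧ mollify φ ρ n x ≤ φ x + k / n) ∧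
      (∀ x : ℝ, 0 ≤ x → ∀ u : ℝ → ℝ, IsRetention u →
        gen F p lam q u (mollify φ ρ n) (deriv (mollify φ ρ n)) x
          ≤ (1 + k * (3 * lam + 2 * q)) / n) := by
  intro n hn
  have hn0 : (0 : ℝ) < n := by exact_mod_cast hn
  have hFy : ∀ᵐ y ∂F, 0 ≤ y := measure_mono_null (fun _ hy => by simpa using hy) hF
  have hφ' : ∀ᵐ t, x₀ < t → 0 ≤ φ' t := hlb.mono fun t h ht => zero_le_one.trans (h ht)
  have hφc := continuous_of_sub_eq_intervalIntegral hloc hAC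
  have hφm : Monotone φ := MonotoneOn.Iic_union_Ici (fun a ha b hb _ => by
    rw [hzero a ha, hzero b hb]) (monotoneOn_Ici_of_sub_eq_intervalIntegral hAC hφ')
  have hρ : IsRightMollifier ρ 1 := ⟨hρC1.continuous, hρ0, hρsupp, hρint⟩
  have hw := hρ.rescale hn0
  rw [mollify_eq_shiftConv φ hρ hn, deriv_shiftConv hw.1 hw.hasCompactSupport hloc hAC]
  refine ⟨contDiff_one_shiftConv hw.1 hw.hasCompactSupport hloc hAC, fun x => ⟨?_, ?_⟩,
    fun x hx u hu => ?_⟩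
  · exact hw.le_shiftConv hφc fun s hs => hφm (by linarith [hs.1])
  · refine hw.shiftConv_le hφc fun s hs => ?_
    have hlip := sub_le_mul_of_sub_eq_intervalIntegral hloc hAC hub
      (le_add_of_nonneg_right (a := x) hs.1.le)
    have hks : k * s ≤ k / n := by
      rw [← mul_one_div]; exact mul_le_mul_of_nonneg_left hs.2.le (by linarith)
    linarith
  calc gen F p lam q u (shiftConv _ φ) (shiftConv _ φ') x ≤ 0 :=
        gen_shiftConv_nonpos hu.1 (hFy.mono fun y hy => (hu.2 y hy).1) hw.1 hw.hasCompactSupport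
          hw.2.1 (hw.2.2.1.trans Ioo_subset_Ioi_self) hφc hφm hpos
          (locallyIntegrable_of_forall_intervalIntegrable hloc)
          ((monotoneOn_premium hA1 hA2 hFy hu).mono (Ici_subset_Ici.2 hx))
          (hφ'.mono fun t h ht => h (by linarith))
          (hgen.mono fun t h ht => h (by linarith) u hu)
    _ ≤ (1 + k * (3 * lam + 2 * q)) / n := by positivity

/-- estimate (EstimLu) in the proof of Proposition 3.2.  The right
mollifications `ψ_n` of an absolutely continuous super-solution `φ` are `C¹`, satisfy
`φ ≤ ψ_n ≤ φ + k/n`, and for every `x ≥ 0`, every retention policy `u` and every `n ≥ 1`,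
`𝓛^u ψ_n(x) ≤ (1 + k(3λ + 2q))/n`. -/
theorem mollified_supersolution_generator_estimate
    (F : Measure ℝ) [IsProbabilityMeasure F] (hF : F (Iio 0) = 0)
    (hmean : Integrable (fun y : ℝ => y) F)
    (p : ℝ → ℝ → ℝ) (P1 : ℝ) (hA1 : AssumptionA1 p) (hA2 : AssumptionA2 F p P1)
    (lam q k : ℝ) (hlam : 0 < lam) (hq : 0 < q) (hk : 1 ≤ k)
    (x₀ : ℝ) (hx₀ : x₀ < 0)
    (φ φ' : ℝ → ℝ)
    (hzero : ∀ x : ℝ, x ≤ x₀ → φ x = 0)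
    (hpos : ∀ x : ℝ, 0 ≤ φ x)
    (hloc : ∀ a b : ℝ, IntervalIntegrable φ' volume a b)
    (hAC : ∀ a b : ℝ, φ b - φ a = ∫ t in a..b, φ' t)
    (hub : ∀ᵐ x : ℝ ∂volume, φ' x ≤ k)
    (hlb : ∀ᵐ x : ℝ ∂volume, x₀ < x → 1 ≤ φ' x)
    (hgrow : ∃ c : ℝ, ∀ x : ℝ, φ x ≤ c * (1 + |x|))
    (hgen : ∀ᵐ x : ℝ ∂volume, 0 ≤ x → ∀ u : ℝ → ℝ, IsRetention u →
      gen F p lam q u φ φ' x ≤ 0)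
    (ρ : ℝ → ℝ) (hρC1 : ContDiff ℝ 1 ρ) (hρ0 : ∀ s : ℝ, 0 ≤ ρ s)
    (hρsupp : Function.support ρ ⊆ Ioo 0 1) (hρint : (∫ s, ρ s) = 1) :
    ∀ n : ℕ, 1 ≤ n →
      ContDiff ℝ 1 (mollify φ ρ n) ∧
      (∀ x : ℝ, φ x ≤ mollify φ ρ n x ∧ mollify φ ρ n x ≤ φ x + k / n) ∧
      (∀ x : ℝ, 0 ≤ x → ∀ u : ℝ → ℝ, IsRetention u →
        gen F p lam q u (mollify φ ρ n) (deriv (mollify φ ρ n)) x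
          ≤ (1 + k * (3 * lam + 2 * q)) / n) :=
  mollified_supersolution_generator_estimate_general F hF p P1 hA1 hA2 lam q k hlam hq hk x₀ hx₀ φ
    φ' hzero hpos hloc hAC hub hlb hgen ρ hρC1 hρ0 hρsupp hρint
end
end

section
/- (Weak duality step in the proof of Theorem 4.1.) Assume [A1], [A2], λ > 0, q > 0, k ≥ 1 and let x ≥ 0. Equip 𝓡 with the σ-algebra induced by the evaluation maps u ↦ u(y), y ≥ 0. Let φ : ℝ → [0,∞) be C¹ with 1 ≤ φ'(y) ≤ k for all y ≥ 0 and 𝓛^u φ(y) ≤ 0 for every u ∈ 𝓡 and every y ≥ 0. Let γ₀ be a Borel probability measure on [0,∞) × ℝ, γ₁ a finite measure on [0,∞) × ℝ × [0,∞) × [0,∞) × 𝓡, and γ₂, γ₃ finite measures on [0,∞) × ℝ × [0,∞) × [0,∞) × 𝓡 × [0,∞) (coordinates (s₁, y₁, s₂, y₂, u) resp. (s₁, y₁, s₂, y₂, u, l)). Assume that (s₁,y₁) ↦ e^{−q s₁} φ(y₁) is γ₀-integrable, (y₂,u) ↦ 𝓛^u φ(y₂) is γ₁-integrable, y₂ ↦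 φ'(y₂) is γ₂- and γ₃-integrable, and that the adjoint identity holds: ∫ e^{−q s₁} φ(y₁) dγ₀ = φ(x) + ∫ 𝓛^u φ(y₂) dγ₁ + ∫ φ'(y₂) dγ₃ − ∫ φ'(y₂) dγ₂. Then γ₂(total mass) − k·γ₃(total mass) ≤ φ(x). -/
open MeasureTheory Set Real Filter

noncomputable section

/-! Read the adjoint identity term by term: the `γ₀`-integral is nonnegative because `φ ≥ 0`,
the `γ₁`-integral is nonpositive because `𝓛^u φ ≤ 0` on the support of `γ₁`, and `1 ≤ φ' ≤ k`
bounds the `γ₂`-integral below by the mass of `γ₂` and the `γ₃`-integral above by `k` times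
the mass of `γ₃`. -/

section ConstBounds

variable {α : Type*} [MeasurableSpace α] {μ : Measure α} [IsFiniteMeasure μ] {f : α → ℝ} {c : ℝ}

lemma mul_measureReal_univ_le_integral (hf : Integrable f μ) (h : ∀ᵐ a ∂μ, c ≤ f a) :
    c * μ.real univ ≤ ∫ a, f a ∂μ := by
  simpa [integral_const, mul_comm] using integral_mono_ae (integrable_const c) hf h

lemma integral_le_mul_measureReal_univ (hf : Integrable f μ) (h : ∀ᵐ a ∂μ, f a ≤ c) :
    ∫ a, f a ∂μ ≤ c * μ.real univ := by
  simpa [integral_const, mul_comm] using integral_mono_ae hf (integrable_const c) h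

end ConstBounds

theorem weak_duality_general
    (F : Measure ℝ) (p : ℝ → ℝ → ℝ) (lam q k : ℝ) (x : ℝ)
    (φ : ℝ → ℝ) (hφ0 : ∀ y : ℝ, 0 ≤ φ y)
    (hφ' : ∀ y : ℝ, 0 ≤ y → 1 ≤ deriv φ y ∧ deriv φ y ≤ k)
    (hφgen : ∀ u : ℝ → ℝ, IsRetention u → ∀ y : ℝ, 0 ≤ y →
      gen F p lam q u φ (deriv φ) y ≤ 0)
    (γ0 : Measure (ℝ × ℝ))
    (γ1 : Measure (ℝ × ℝ × ℝ × ℝ × {u : ℝ → ℝ // IsRetention u}))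
    (γ2 γ3 : Measure (ℝ × ℝ × ℝ × ℝ × {u : ℝ → ℝ // IsRetention u} × ℝ))
    [IsFiniteMeasure γ2] [IsFiniteMeasure γ3]
    (hγ1s : ∀ᵐ z ∂γ1, 0 ≤ z.1 ∧ 0 ≤ z.2.2.1 ∧ 0 ≤ z.2.2.2.1)
    (hγ2s : ∀ᵐ z ∂γ2, 0 ≤ z.1 ∧ 0 ≤ z.2.2.1 ∧ 0 ≤ z.2.2.2.1 ∧ 0 ≤ z.2.2.2.2.2)
    (hγ3s : ∀ᵐ z ∂γ3, 0 ≤ z.1 ∧ 0 ≤ z.2.2.1 ∧ 0 ≤ z.2.2.2.1 ∧ 0 ≤ z.2.2.2.2.2)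
    (h2int : Integrable
      (fun z : ℝ × ℝ × ℝ × ℝ × {u : ℝ → ℝ // IsRetention u} × ℝ => deriv φ z.2.2.2.1) γ2)
    (h3int : Integrable
      (fun z : ℝ × ℝ × ℝ × ℝ × {u : ℝ → ℝ // IsRetention u} × ℝ => deriv φ z.2.2.2.1) γ3)
    (hadj : (∫ z, Real.exp (-q * z.1) * φ z.2 ∂γ0)
      = φ x
        + (∫ z, gen F p lam q (z.2.2.2.2 : {u : ℝ → ℝ // IsRetention u}).1 φ (deriv φ)
            z.2.2.2.1 ∂γ1)
        + (∫ z, deriv φ z.2.2.2.1 ∂γ3) - (∫ z, deriv φ z.2.2.2.1 ∂γ2)) :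
    (γ2 univ).toReal - k * (γ3 univ).toReal ≤ φ x := by
  have hγ0 : 0 ≤ ∫ z, Real.exp (-q * z.1) * φ z.2 ∂γ0 :=
    integral_nonneg fun z => mul_nonneg (Real.exp_pos _).le (hφ0 _)
  have hγ1 : (∫ z, gen F p lam q (z.2.2.2.2 : {u : ℝ → ℝ // IsRetention u}).1 φ (deriv φ)
      z.2.2.2.1 ∂γ1) ≤ 0 :=
    integral_nonpos_of_ae <| hγ1s.mono fun z hz => hφgen _ z.2.2.2.2.2 _ hz.2.2
  have hγ2 : 1 * γ2.real univ ≤ ∫ z, deriv φ z.2.2.2.1 ∂γ2 :=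
    mul_measureReal_univ_le_integral h2int <| hγ2s.mono fun z hz => (hφ' _ hz.2.2.1).1
  have hγ3 : ∫ z, deriv φ z.2.2.2.1 ∂γ3 ≤ k * γ3.real univ :=
    integral_le_mul_measureReal_univ h3int <| hγ3s.mono fun z hz => (hφ' _ hz.2.2.1).2
  rw [measureReal_def] at hγ2 hγ3
  linarith

/-- weak duality step in the proof of Theorem 4.1.  For any `C¹` dual test
function `φ ≥ 0` with `φ' ∈ [1,k]` on `[0,∞)` and `𝓛^u φ ≤ 0` on `[0,∞)`, and any
occupation-measure quadruple `(γ₀,γ₁,γ₂,γ₃)` satisfying the adjoint identity, one has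
`γ₂(total mass) − k γ₃(total mass) ≤ φ(x)`.  Here `𝓡` is equipped with the σ-algebra
induced by the evaluation maps (the subtype of the product σ-algebra). -/
theorem weak_duality
    (F : Measure ℝ) [IsProbabilityMeasure F] (hF : F (Iio 0) = 0)
    (p : ℝ → ℝ → ℝ) (P1 : ℝ) (hA1 : AssumptionA1 p) (hA2 : AssumptionA2 F p P1)
    (lam q k : ℝ) (hlam : 0 < lam) (hq : 0 < q) (hk : 1 ≤ k)
    (x : ℝ) (hx : 0 ≤ x)
    (φ : ℝ → ℝ) (hφC1 : ContDiff ℝ 1 φ) (hφ0 : ∀ y : ℝ, 0 ≤ φ y)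
    (hφ' : ∀ y : ℝ, 0 ≤ y → 1 ≤ deriv φ y ∧ deriv φ y ≤ k)
    (hφgen : ∀ u : ℝ → ℝ, IsRetention u → ∀ y : ℝ, 0 ≤ y →
      gen F p lam q u φ (deriv φ) y ≤ 0)
    (γ0 : Measure (ℝ × ℝ)) [IsProbabilityMeasure γ0]
    (γ1 : Measure (ℝ × ℝ × ℝ × ℝ × {u : ℝ → ℝ // IsRetention u})) [IsFiniteMeasure γ1]
    (γ2 γ3 : Measure (ℝ × ℝ × ℝ × ℝ × {u : ℝ → ℝ // IsRetention u} × ℝ))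
    [IsFiniteMeasure γ2] [IsFiniteMeasure γ3]
    (hγ0s : ∀ᵐ z ∂γ0, 0 ≤ z.1)
    (hγ1s : ∀ᵐ z ∂γ1, 0 ≤ z.1 ∧ 0 ≤ z.2.2.1 ∧ 0 ≤ z.2.2.2.1)
    (hγ2s : ∀ᵐ z ∂γ2, 0 ≤ z.1 ∧ 0 ≤ z.2.2.1 ∧ 0 ≤ z.2.2.2.1 ∧ 0 ≤ z.2.2.2.2.2)
    (hγ3s : ∀ᵐ z ∂γ3, 0 ≤ z.1 ∧ 0 ≤ z.2.2.1 ∧ 0 ≤ z.2.2.2.1 ∧ 0 ≤ z.2.2.2.2.2)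
    (h0int : Integrable (fun z : ℝ × ℝ => Real.exp (-q * z.1) * φ z.2) γ0)
    (h1int : Integrable
      (fun z : ℝ × ℝ × ℝ × ℝ × {u : ℝ → ℝ // IsRetention u} =>
        gen F p lam q (z.2.2.2.2 : {u : ℝ → ℝ // IsRetention u}).1 φ (deriv φ) z.2.2.2.1) γ1)
    (h2int : Integrable
      (fun z : ℝ × ℝ × ℝ × ℝ × {u : ℝ → ℝ // IsRetention u} × ℝ => deriv φ z.2.2.2.1) γ2)
    (h3int : Integrable
      (fun z : ℝ × ℝ × ℝ × ℝ × {u : ℝ → ℝ // IsRetention u} × ℝ => deriv φ z.2.2.2.1) γ3)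
    (hadj : (∫ z, Real.exp (-q * z.1) * φ z.2 ∂γ0)
      = φ x
        + (∫ z, gen F p lam q (z.2.2.2.2 : {u : ℝ → ℝ // IsRetention u}).1 φ (deriv φ)
            z.2.2.2.1 ∂γ1)
        + (∫ z, deriv φ z.2.2.2.1 ∂γ3) - (∫ z, deriv φ z.2.2.2.1 ∂γ2)) :
    (γ2 univ).toReal - k * (γ3 univ).toReal ≤ φ x :=
  weak_duality_general F p lam q k x φ hφ0 hφ' hφgen γ0 γ1 γ2 γ3 hγ1s hγ2s hγ3s h2int h3int hadj
end
end

section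
/- (Proposition 5.1, part 2.) Assume [A1], [A2], λ > 0, q > [p]₁, k > 1 and ∫₀^∞ y dF(y) < ∞. Then the dual value extends to the negative semi-axis by the formula Λ*(x) = max{Λ*(0) + k·x, 0} for every x < 0. -/
open MeasureTheory Set Real Filter
open scoped ENNReal

noncomputable section

/-- The class `𝐅` of dual test functions: `C¹` non-negative functions with `φ' ≤ k` on `ℝ`,
`φ' ≥ 1` on `[0,∞)` and `𝓛^u φ ≤ 0` on `[0,∞)` for every retention policy `u`. -/
def memF (F : MeasureTheory.Measure ℝ) (p : ℝ → ℝ → ℝ) (lam q k : ℝ) (φ : ℝ → ℝ) : Prop :=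
  ContDiff ℝ 1 φ ∧ (∀ x : ℝ, 0 ≤ φ x) ∧ (∀ y : ℝ, deriv φ y ≤ k) ∧
  (∀ y : ℝ, 0 ≤ y → 1 ≤ deriv φ y) ∧
  (∀ u : ℝ → ℝ, IsRetention u → ∀ y : ℝ, 0 ≤ y → gen F p lam q u φ (deriv φ) y ≤ 0)

/-- The dual value `Λ*(x) = inf{φ(x) : φ ∈ 𝐅} ∈ [0,∞]`. -/
def LambdaStar (F : MeasureTheory.Measure ℝ) (p : ℝ → ℝ → ℝ) (lam q k : ℝ) (x : ℝ) : ℝ≥0∞ :=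
  ⨅ (φ : ℝ → ℝ) (_ : memF F p lam q k φ), ENNReal.ofReal (φ x)

/-!
Every `φ ∈ 𝐅` has `0 ≤ φ` and `φ' ≤ k`, so `φ x ≥ max (φ 0 + k x) 0` for `x < 0`, which gives
`Λ*(x) ≥ Λ*(0) - k (-x)`. Conversely, the generator inequality looks at `φ` on `[0, ∞)`
pointwise and at `(-∞, 0)` only through the term `λ ∫ φ (y - u) dF`, which is monotone in `φ`.
Given `φ ∈ 𝐅` and small `η, τ > 0` with `λ τ ≤ q η`, keep `φ + η` on `[0, ∞)` and replace it on
`(-∞, 0]` by a `C¹` smoothing of the corner `t ↦ max (φ 0 + η + k t) 0` matching value and slope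
at `0`. The new function lies below `φ + η + τ`, so raising the value at `y` by `η` pays for the
integral term, and it is within `η + τ` of `max (φ 0 + k x) 0` on the negative axis. For an
arbitrary retention `u` the integrals need not be finite; the generator inequality is first
obtained for the truncations `min u n` and then passes to the limit by dominated convergence.
-/

open Topology

theorem hasDerivAt_ite_le {f g f' g' : ℝ → ℝ} {a : ℝ}
    (hf : ∀ t, HasDerivAt f (f' t) t) (hg : ∀ t, HasDerivAt g (g' t) t)
    (hfg : f a = g a) (hfg' : f' a = g' a) (t : ℝ) :
    HasDerivAt (fun s => if s ≤ a then f s else g s) (if t ≤ a then f' t else g' t) t := by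
  rcases lt_trichotomy t a with ht | rfl | ht
  · rw [if_pos ht.le]
    exact (hf t).congr_of_eventuallyEq <| by
      filter_upwards [Iio_mem_nhds ht] with s hs using if_pos (le_of_lt hs)
  · rw [if_pos le_rfl]
    have hle : HasDerivWithinAt (fun s => if s ≤ t then f s else g s) (f' t) (Iic t) t :=
      (hf t).hasDerivWithinAt.congr (fun s hs => if_pos hs) (if_pos le_rfl)
    have hge : HasDerivWithinAt (fun s => if s ≤ t then f s else g s) (f' t) (Ici t) t := by
      rw [hfg']
      refine (hg t).hasDerivWithinAt.congr (fun s hs => ?_) (by simp [hfg])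
      rcases (mem_Ici.mp hs).eq_or_lt with rfl | hlt
      · simp [hfg]
      · exact if_neg (not_le.mpr hlt)
    simpa [Iic_union_Ici] using hle.union hge
  · rw [if_neg (not_le.mpr ht)]
    exact (hg t).congr_of_eventuallyEq <| by
      filter_upwards [Ioi_mem_nhds ht] with s hs using if_neg (not_le.mpr hs)

theorem hasDerivAt_max_zero_sq (t : ℝ) :
    HasDerivAt (fun s : ℝ => max s 0 ^ 2) (2 * max t 0) t := by
  have h := hasDerivAt_ite_le (f := fun _ => 0) (g := fun s : ℝ => s ^ 2) (f' := fun _ => 0)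
    (g' := fun s => 2 * s) (a := 0) (fun t => hasDerivAt_const t 0)
    (fun t => by simpa using hasDerivAt_pow 2 t) (by simp) (by simp) t
  convert h using 1
  · ext s
    split_ifs with hs
    · simp [hs]
    · simp [le_of_lt (not_le.mp hs)]
  · split_ifs with ht
    · simp [ht]
    · simp [le_of_lt (not_le.mp ht)]

def ramp (σ : ℝ) : ℝ := max σ 0 - max (σ - 1) 0

def rampPrimitive (σ : ℝ) : ℝ := (max σ 0 ^ 2 - max (σ - 1) 0 ^ 2) / 2

theorem hasDerivAt_rampPrimitive (σ : ℝ) : HasDerivAt rampPrimitive (ramp σ) σ := by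
  have h := ((hasDerivAt_max_zero_sq σ).sub
    ((hasDerivAt_max_zero_sq (σ - 1)).comp_sub_const σ 1)).div_const 2
  exact h.congr_deriv (by simp only [ramp]; ring)

@[fun_prop]
theorem continuous_ramp : Continuous ramp := by
  unfold ramp; fun_prop

theorem ramp_nonneg (σ : ℝ) : 0 ≤ ramp σ := by
  unfold ramp; grind

theorem ramp_le_one (σ : ℝ) : ramp σ ≤ 1 := by
  unfold ramp; grind

theorem ramp_of_one_le {σ : ℝ} (h : 1 ≤ σ) : ramp σ = 1 := by
  unfold ramp; grind

theorem rampPrimitive_of_nonpos {σ : ℝ} (h : σ ≤ 0) : rampPrimitive σ = 0 := by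
  simp [rampPrimitive, max_eq_right h, max_eq_right (by linarith : σ - 1 ≤ 0)]

theorem rampPrimitive_of_one_le {σ : ℝ} (h : 1 ≤ σ) : rampPrimitive σ = σ - 1 / 2 := by
  rw [rampPrimitive, max_eq_left (by linarith), max_eq_left (by linarith)]
  ring

theorem monotone_rampPrimitive : Monotone rampPrimitive :=
  monotone_of_hasDerivAt_nonneg hasDerivAt_rampPrimitive ramp_nonneg

theorem rampPrimitive_nonneg (σ : ℝ) : 0 ≤ rampPrimitive σ := by
  rcases le_total σ 0 with h | h
  · rw [rampPrimitive_of_nonpos h]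
  · exact (rampPrimitive_of_nonpos le_rfl).symm.le.trans (monotone_rampPrimitive h)

theorem rampPrimitive_le_max (σ : ℝ) : rampPrimitive σ ≤ max σ 0 := by
  rcases le_total σ 0 with h | h
  · simp [rampPrimitive_of_nonpos h]
  rcases le_total σ 1 with h1 | h1
  · rw [rampPrimitive, max_eq_left h, max_eq_right (by linarith)]
    nlinarith
  · rw [rampPrimitive_of_one_le h1, max_eq_left h]
    linarith

section CornerSmoothing

variable {τ c b k : ℝ}

/- The slope rises from `0` to `k` just after the corner `t = -b/k`, stays at `k`, and falls
to `k c` on the window of length `τ/k` ending at `t = 0`; the constant term makes the value at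
`0` equal to `b` once `τ ≤ b`. -/
def cornerSmoothing (τ c b k t : ℝ) : ℝ :=
  τ * rampPrimitive ((b + k * t) / τ) - (1 - c) * τ * rampPrimitive (k * t / τ + 1)
    + τ * (1 - c / 2)

def cornerSmoothingSlope (τ c b k t : ℝ) : ℝ :=
  k * (ramp ((b + k * t) / τ) - (1 - c) * ramp (k * t / τ + 1))

theorem hasDerivAt_cornerSmoothing (hτ : τ ≠ 0) (t : ℝ) :
    HasDerivAt (cornerSmoothing τ c b k) (cornerSmoothingSlope τ c b k t) t := by
  have h₁ := (hasDerivAt_rampPrimitive ((b + k * t) / τ)).comp t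
    ((((hasDerivAt_id t).const_mul k).const_add b).div_const τ)
  have h₂ := (hasDerivAt_rampPrimitive (k * t / τ + 1)).comp t
    ((((hasDerivAt_id t).const_mul k).div_const τ).add_const 1)
  refine (((h₁.const_mul τ).sub (h₂.const_mul ((1 - c) * τ))).add_const _).congr_deriv ?_
  simp only [cornerSmoothingSlope, mul_one]
  field_simp

theorem continuous_cornerSmoothingSlope : Continuous (cornerSmoothingSlope τ c b k) := by
  unfold cornerSmoothingSlope
  fun_prop

theorem cornerSmoothing_zero (hτ : 0 < τ) (hτb : τ ≤ b) : cornerSmoothing τ c b k 0 = b := by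
  have hb : 1 ≤ b / τ := (one_le_div hτ).mpr hτb
  simp only [cornerSmoothing, mul_zero, add_zero, zero_div, zero_add,
    rampPrimitive_of_one_le hb, rampPrimitive_of_one_le le_rfl]
  field_simp
  ring

theorem cornerSmoothingSlope_zero (hτ : 0 < τ) (hτb : τ ≤ b) :
    cornerSmoothingSlope τ c b k 0 = k * c := by
  have hb : 1 ≤ b / τ := (one_le_div hτ).mpr hτb
  simp only [cornerSmoothingSlope, mul_zero, add_zero, zero_div, zero_add,
    ramp_of_one_le hb, ramp_of_one_le le_rfl]
  ring

theorem cornerSmoothingSlope_le (hk : 0 ≤ k) (hc : c ≤ 1) (t : ℝ) :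
    cornerSmoothingSlope τ c b k t ≤ k := by
  have : 0 ≤ (1 - c) * ramp (k * t / τ + 1) := mul_nonneg (by linarith) (ramp_nonneg _)
  have := ramp_le_one ((b + k * t) / τ)
  unfold cornerSmoothingSlope
  nlinarith

theorem cornerSmoothing_nonneg (hτ : 0 < τ) (hτb : τ ≤ b) (hc₀ : 0 ≤ c) (hc₁ : c ≤ 1)
    (t : ℝ) : 0 ≤ cornerSmoothing τ c b k t := by
  have hshift : k * t / τ + 1 ≤ (b + k * t) / τ := by
    rw [add_div, add_comm]
    exact add_le_add_left ((one_le_div hτ).mpr hτb) _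
  have hR := monotone_rampPrimitive hshift
  have hR₀ := rampPrimitive_nonneg (k * t / τ + 1)
  have : (1 - c) * rampPrimitive (k * t / τ + 1) ≤ rampPrimitive ((b + k * t) / τ) := by
    nlinarith
  unfold cornerSmoothing
  nlinarith

theorem cornerSmoothing_le (hτ : 0 < τ) (hc₀ : 0 ≤ c) (hc₁ : c ≤ 1) (t : ℝ) :
    cornerSmoothing τ c b k t ≤ max (b + k * t) 0 + τ := by
  have h₁ : τ * rampPrimitive ((b + k * t) / τ) ≤ max (b + k * t) 0 := by
    calc τ * rampPrimitive ((b + k * t) / τ) ≤ τ * max ((b + k * t) / τ) 0 :=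
          mul_le_mul_of_nonneg_left (rampPrimitive_le_max _) hτ.le
      _ = max (b + k * t) 0 := by rw [mul_max_of_nonneg _ _ hτ.le, mul_div_cancel₀ _ hτ.ne',
          mul_zero]
  have h₂ : 0 ≤ (1 - c) * τ * rampPrimitive (k * t / τ + 1) :=
    mul_nonneg (mul_nonneg (by linarith) hτ.le) (rampPrimitive_nonneg _)
  unfold cornerSmoothing
  nlinarith

end CornerSmoothing

section TestFunctions

variable {F : Measure ℝ} {p : ℝ → ℝ → ℝ} {lam q k : ℝ} {φ : ℝ → ℝ}

theorem memF.continuous (hφ : memF F p lam q k φ) : Continuous φ :=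
  hφ.1.continuous

theorem memF.differentiable (hφ : memF F p lam q k φ) : Differentiable ℝ φ :=
  hφ.1.differentiable one_ne_zero

theorem memF.sub_le_mul (hφ : memF F p lam q k φ) {s t : ℝ} (hst : s ≤ t) :
    φ t - φ s ≤ k * (t - s) :=
  image_sub_le_mul_sub_of_deriv_le hφ.differentiable hφ.2.2.1 hst

theorem memF.max_add_mul_le (hφ : memF F p lam q k φ) {t : ℝ} (ht : t ≤ 0) :
    max (φ 0 + k * t) 0 ≤ φ t :=
  max_le (by linarith [hφ.sub_le_mul ht]) (hφ.2.1 t)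

theorem memF.monotoneOn (hφ : memF F p lam q k φ) : MonotoneOn φ (Ici 0) := by
  refine monotoneOn_of_deriv_nonneg (convex_Ici 0) hφ.continuous.continuousOn
    hφ.differentiable.differentiableOn fun t ht => ?_
  rw [interior_Ici] at ht
  linarith [hφ.2.2.2.1 t (le_of_lt ht)]

end TestFunctions

theorem IsRetention.min_const {u : ℝ → ℝ} (hu : IsRetention u) {n : ℝ} (hn : 0 ≤ n) :
    IsRetention (fun z => min (u z) n) :=
  ⟨hu.1.min measurable_const, fun z hz =>
    ⟨le_min (hu.2 z hz).1 hn, (min_le_left _ _).trans (hu.2 z hz).2⟩⟩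

theorem IsRetention.ae_nonneg_and_le {F : Measure ℝ} (hF : F (Iio 0) = 0) {u : ℝ → ℝ}
    (hu : IsRetention u) : ∀ᵐ z ∂F, 0 ≤ u z ∧ u z ≤ z := by
  have hpos : ∀ᵐ z ∂F, 0 ≤ z := by
    rw [ae_iff]
    simp only [not_le]
    exact hF
  filter_upwards [hpos] with z hz using hu.2 z hz

theorem AssumptionA1.abs_sub_le_supDiff {p : ℝ → ℝ → ℝ} (hA1 : AssumptionA1 p)
    {w z x x' : ℝ} (hw : 0 ≤ w) (hwz : w ≤ z) (hx : 0 ≤ x) (hx' : 0 ≤ x') :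
    |p w x - p w x'| ≤ supDiff p x x' z := by
  refine le_csSup ⟨p z x + p z x', ?_⟩ ⟨w, ⟨hw, hwz⟩, rfl⟩
  rintro _ ⟨v, ⟨hv, hvz⟩, rfl⟩
  have hvx := hA1.2.1 x hx hv (hv.trans hvz) hvz
  have hvx' := hA1.2.1 x' hx' hv (hv.trans hvz) hvz
  have := hA1.1 v x hv hx
  have := hA1.1 v x' hv hx'
  exact abs_le.mpr ⟨by linarith, by linarith⟩

theorem AssumptionA1.abs_le_add_supDiff {p : ℝ → ℝ → ℝ} (hA1 : AssumptionA1 p)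
    {w z y : ℝ} (hw : 0 ≤ w) (hwz : w ≤ z) (hy : 0 ≤ y) :
    |p w y| ≤ p z 0 + supDiff p y 0 z := by
  have hwy := hA1.2.1 y hy hw (hw.trans hwz) hwz
  have hz := hA1.abs_sub_le_supDiff (hw.trans hwz) le_rfl hy le_rfl
  rw [abs_of_nonneg (hA1.1 w y hw hy)]
  linarith [le_abs_self (p z y - p z 0)]

theorem integrable_comp_sub_min {F : Measure ℝ} [IsFiniteMeasure F] (hF : F (Iio 0) = 0)
    {g u : ℝ → ℝ} (hg : Continuous g) (hu : IsRetention u) (y : ℝ) (n : ℕ) :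
    Integrable (fun z => g (y - min (u z) n)) F := by
  obtain ⟨C, hC⟩ := (isCompact_Icc (a := y - n) (b := y)).exists_bound_of_continuousOn
    hg.continuousOn
  have hun := hu.min_const n.cast_nonneg
  refine Integrable.mono' (integrable_const C)
    (hg.measurable.comp (measurable_const.sub hun.1)).aestronglyMeasurable ?_
  filter_upwards [hun.ae_nonneg_and_le hF] with z hz
  exact hC _ ⟨by linarith [min_le_right (u z) n], by linarith [hz.1]⟩

section Generator

variable {F : Measure ℝ} {p : ℝ → ℝ → ℝ} {lam q : ℝ}

theorem tendsto_gen_min_const [IsFiniteMeasure F] (hF : F (Iio 0) = 0) (hA1 : AssumptionA1 p)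
    {P1 : ℝ} (hA2 : AssumptionA2 F p P1) {ψ ψ' u : ℝ → ℝ} (hψ : Continuous ψ)
    (hu : IsRetention u) {y M : ℝ} (hy : 0 ≤ y) (hM : ∀ t ≤ y, |ψ t| ≤ M) :
    Tendsto (fun n : ℕ => gen F p lam q (fun z => min (u z) n) ψ ψ' y) atTop
      (𝓝 (gen F p lam q u ψ ψ' y)) := by
  have hun (n : ℕ) := hu.min_const n.cast_nonneg
  have hev (z : ℝ) : (fun n : ℕ => min (u z) n) =ᶠ[atTop] fun _ => u z :=
    (eventually_ge_atTop ⌈u z⌉₊).mono fun n hn =>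
      min_eq_left ((Nat.le_ceil _).trans (by exact_mod_cast hn))
  have hpremium : Tendsto (fun n : ℕ => ∫ z, p (min (u z) n) y ∂F) atTop
      (𝓝 (∫ z, p (u z) y ∂F)) := by
    refine tendsto_integral_of_dominated_convergence (fun z => p z 0 + supDiff p y 0 z)
      (fun n => (hA2.1.comp ((hun n).1.prodMk measurable_const)).aestronglyMeasurable)
      (hA2.2.2.1.add (hA2.2.2.2.2.1 y 0 hy le_rfl)) (fun n => ?_) ?_
    · filter_upwards [(hun n).ae_nonneg_and_le hF] with z hz
      exact hA1.abs_le_add_supDiff hz.1 hz.2 hy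
    · exact ae_of_all _ fun z => tendsto_const_nhds.congr' ((hev z).fun_comp (p · y)).symm
  have hclaims : Tendsto (fun n : ℕ => ∫ z, ψ (y - min (u z) n) ∂F) atTop
      (𝓝 (∫ z, ψ (y - u z) ∂F)) := by
    refine tendsto_integral_of_dominated_convergence (fun _ => M)
      (fun n => (hψ.measurable.comp (measurable_const.sub (hun n).1)).aestronglyMeasurable)
      (integrable_const M) (fun n => ?_) ?_
    · filter_upwards [(hun n).ae_nonneg_and_le hF] with z hz
      exact hM _ (by linarith [hz.1])
    · exact ae_of_all _ fun z => tendsto_const_nhds.congr' ((hev z).fun_comp (ψ <| y - ·)).symm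
  exact ((hpremium.mul_const _).add (hclaims.const_mul lam)).sub tendsto_const_nhds

theorem gen_le_gen_add [IsProbabilityMeasure F] {u φ ψ φ' ψ' : ℝ → ℝ} {y δ η : ℝ}
    (hlam : 0 ≤ lam) (hφi : Integrable (fun z => φ (y - u z)) F)
    (hψi : Integrable (fun z => ψ (y - u z)) F) (hle : ∀ t, ψ t ≤ φ t + δ)
    (hψy : ψ y = φ y + η) (hψ'y : ψ' y = φ' y) :
    gen F p lam q u ψ ψ' y ≤ gen F p lam q u φ φ' y + (lam * δ - (lam + q) * η) := by
  have hint : ∫ z, ψ (y - u z) ∂F ≤ ∫ z, φ (y - u z) ∂F + δ := by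
    calc ∫ z, ψ (y - u z) ∂F ≤ ∫ z, (φ (y - u z) + δ) ∂F :=
          integral_mono hψi (hφi.add (integrable_const δ)) fun z => hle _
      _ = ∫ z, φ (y - u z) ∂F + δ := by simp [integral_add hφi (integrable_const δ)]
  unfold gen
  rw [hψy, hψ'y]
  nlinarith [mul_le_mul_of_nonneg_left hint hlam]

theorem gen_nonpos_of_le_add [IsProbabilityMeasure F] (hF : F (Iio 0) = 0)
    (hA1 : AssumptionA1 p) {P1 : ℝ} (hA2 : AssumptionA2 F p P1) (hlam : 0 ≤ lam) {k : ℝ}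
    {φ ψ ψ' : ℝ → ℝ} (hφ : memF F p lam q k φ) (hψ : Continuous ψ) {y η δ M : ℝ}
    (hle : ∀ t, ψ t ≤ φ t + δ) (hδ : lam * δ ≤ (lam + q) * η) (hy : 0 ≤ y)
    (hM : ∀ t ≤ y, |ψ t| ≤ M) (hψy : ψ y = φ y + η) (hψ'y : ψ' y = deriv φ y)
    {u : ℝ → ℝ} (hu : IsRetention u) : gen F p lam q u ψ ψ' y ≤ 0 := by
  refine le_of_tendsto' (tendsto_gen_min_const hF hA1 hA2 hψ hu hy hM) fun n => ?_
  have hφn := hφ.2.2.2.2 _ (hu.min_const n.cast_nonneg) y hy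
  have := gen_le_gen_add (p := p) (q := q) hlam (integrable_comp_sub_min hF hφ.continuous hu y n)
    (integrable_comp_sub_min hF hψ hu y n) hle hψy hψ'y
  linarith

end Generator

theorem contDiff_one_ite_le {f g f' g' : ℝ → ℝ} {a : ℝ}
    (hf : ∀ t, HasDerivAt f (f' t) t) (hg : ∀ t, HasDerivAt g (g' t) t)
    (hf' : Continuous f') (hg' : Continuous g') (hfg : f a = g a) (hfg' : f' a = g' a) :
    ContDiff ℝ 1 (fun s => if s ≤ a then f s else g s) := by
  have hder := hasDerivAt_ite_le hf hg hfg hfg'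
  refine contDiff_one_iff_deriv.mpr ⟨fun t => (hder t).differentiableAt, ?_⟩
  rw [funext fun t => (hder t).deriv]
  exact Continuous.if_le hf' hg' continuous_id continuous_const fun t ht => ht ▸ hfg'

theorem max_add_zero_le {a η : ℝ} (hη : 0 ≤ η) : max (a + η) 0 ≤ max a 0 + η :=
  max_le (by linarith [le_max_left a 0]) (by linarith [le_max_right a 0])

theorem memF_ite_le_zero {F : Measure ℝ} [IsProbabilityMeasure F] (hF : F (Iio 0) = 0)
    {p : ℝ → ℝ → ℝ} (hA1 : AssumptionA1 p) {P1 : ℝ} (hA2 : AssumptionA2 F p P1)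
    {lam q k : ℝ} (hlam : 0 ≤ lam) {φ g g' : ℝ → ℝ} (hφ : memF F p lam q k φ)
    (hg : ∀ t, HasDerivAt g (g' t) t) (hg' : Continuous g') {η τ : ℝ} (hη : 0 ≤ η)
    (hτ : 0 ≤ τ) (hητ : lam * τ ≤ q * η) (hg₀ : g 0 = φ 0 + η) (hg'₀ : g' 0 = deriv φ 0)
    (hg_nonneg : ∀ t, 0 ≤ g t) (hg'_le : ∀ t, g' t ≤ k)
    (hg_le : ∀ t ≤ 0, g t ≤ max (φ 0 + η + k * t) 0 + τ) :
    memF F p lam q k (fun t => if t ≤ 0 then g t else φ t + η) := by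
  set ψ := fun t => if t ≤ 0 then g t else φ t + η
  have hφη (t : ℝ) : HasDerivAt (fun s => φ s + η) (deriv φ t) t :=
    (hφ.differentiable t).hasDerivAt.add_const η
  have hder (t : ℝ) : HasDerivAt ψ (if t ≤ 0 then g' t else deriv φ t) t :=
    hasDerivAt_ite_le hg hφη hg₀ hg'₀ t
  have hderiv : deriv ψ = fun t => if t ≤ 0 then g' t else deriv φ t :=
    funext fun t => (hder t).deriv
  have hψ_pos {t : ℝ} (ht : 0 ≤ t) : ψ t = φ t + η := by
    rcases ht.eq_or_lt with rfl | ht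
    · simp [ψ, hg₀]
    · simp [ψ, not_le.mpr ht]
  have hψ'_pos {t : ℝ} (ht : 0 ≤ t) : deriv ψ t = deriv φ t := by
    rcases ht.eq_or_lt with rfl | ht
    · simp [hderiv, hg'₀]
    · simp [hderiv, not_le.mpr ht]
  have hψ_nonneg (t : ℝ) : 0 ≤ ψ t := by
    rcases le_total t 0 with ht | ht
    · simpa [ψ, ht] using hg_nonneg t
    · rw [hψ_pos ht]; linarith [hφ.2.1 t]
  have hk : 0 ≤ k := by linarith [hφ.2.2.1 0, hφ.2.2.2.1 0 le_rfl]
  have hψ_le (t : ℝ) : ψ t ≤ φ t + (η + τ) := by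
    rcases le_total t 0 with ht | ht
    · have hmax : max (φ 0 + η + k * t) 0 ≤ max (φ 0 + k * t) 0 + η := by
        rw [add_right_comm]; exact max_add_zero_le hη
      have : ψ t = g t := if_pos ht
      linarith [hφ.max_add_mul_le ht, hg_le t ht]
    · rw [hψ_pos ht]; linarith
  have hψ_bdd {y t : ℝ} (hy : 0 ≤ y) (ht : t ≤ y) : |ψ t| ≤ φ y + η + τ := by
    rw [abs_of_nonneg (hψ_nonneg t)]
    have hφy := hφ.monotoneOn (mem_Ici.mpr le_rfl) (mem_Ici.mpr hy) hy
    rcases le_total t 0 with ht₀ | ht₀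
    · have hmax : max (φ 0 + η + k * t) 0 ≤ φ 0 + η :=
        max_le (by nlinarith) (by linarith [hφ.2.1 0])
      have : ψ t = g t := if_pos ht₀
      linarith [hg_le t ht₀]
    · rw [hψ_pos ht₀]
      linarith [hφ.monotoneOn (mem_Ici.mpr ht₀) (mem_Ici.mpr hy) ht]
  refine ⟨contDiff_one_ite_le hg hφη hg' (hφ.1.continuous_deriv le_rfl) hg₀ hg'₀, hψ_nonneg,
    fun t => ?_, fun t ht => (hψ'_pos ht).symm ▸ hφ.2.2.2.1 t ht,
    fun u hu y hy => ?_⟩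
  · simp only [hderiv]
    split_ifs
    exacts [hg'_le t, hφ.2.2.1 t]
  · exact gen_nonpos_of_le_add hF hA1 hA2 hlam hφ (continuous_iff_continuousAt.mpr
      fun t => (hder t).continuousAt) hψ_le (by linarith) hy (fun t ht => hψ_bdd hy ht)
      (hψ_pos hy) (hψ'_pos hy) hu

theorem memF.exists_memF_le_max {F : Measure ℝ} [IsProbabilityMeasure F] (hF : F (Iio 0) = 0)
    {p : ℝ → ℝ → ℝ} (hA1 : AssumptionA1 p) {P1 : ℝ} (hA2 : AssumptionA2 F p P1)
    {lam q k : ℝ} (hlam : 0 < lam) (hq : 0 < q) {φ : ℝ → ℝ} (hφ : memF F p lam q k φ)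
    {ε : ℝ} (hε : 0 < ε) :
    ∃ ψ, memF F p lam q k ψ ∧ ∀ t ≤ 0, ψ t ≤ max (φ 0 + k * t) 0 + ε := by
  set η := ε / 2 with hη_def
  set τ := min η (q * η / lam)
  set c := deriv φ 0 / k
  have hη : 0 < η := by positivity
  have hτ : 0 < τ := lt_min hη (by positivity)
  have hτη : τ ≤ η := min_le_left _ _
  have hητ : lam * τ ≤ q * η := by
    have := min_le_right η (q * η / lam)
    rwa [le_div_iff₀ hlam, mul_comm] at this
  have hτb : τ ≤ φ 0 + η := by linarith [hφ.2.1 0]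
  have hd₁ : 1 ≤ deriv φ 0 := hφ.2.2.2.1 0 le_rfl
  have hdk : deriv φ 0 ≤ k := hφ.2.2.1 0
  have hk : 0 < k := by linarith
  have hc₀ : 0 ≤ c := by positivity
  have hc₁ : c ≤ 1 := (div_le_one hk).mpr hdk
  refine ⟨_, memF_ite_le_zero hF hA1 hA2 hlam.le hφ (hasDerivAt_cornerSmoothing hτ.ne')
    continuous_cornerSmoothingSlope hη.le hτ.le hητ (cornerSmoothing_zero hτ hτb) ?_
    (cornerSmoothing_nonneg hτ hτb hc₀ hc₁) (cornerSmoothingSlope_le hk.le hc₁)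
    (fun t _ => cornerSmoothing_le hτ hc₀ hc₁ t), fun t ht => ?_⟩
  · rw [cornerSmoothingSlope_zero hτ hτb, mul_div_cancel₀ _ hk.ne']
  · have hmax : max (φ 0 + η + k * t) 0 ≤ max (φ 0 + k * t) 0 + η := by
      rw [add_right_comm]; exact max_add_zero_le hη.le
    simp only [if_pos ht]
    linarith [hη_def, cornerSmoothing_le (b := φ 0 + η) (k := k) hτ hc₀ hc₁ t]

theorem ENNReal.iInf_sub {ι : Sort*} (g : ι → ℝ≥0∞) {c : ℝ≥0∞} (hc : c ≠ ∞) :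
    (⨅ i, g i) - c = ⨅ i, (g i - c) :=
  Monotone.map_iInf_of_continuousAt (ENNReal.continuous_sub_right c).continuousAt
    (fun _ _ h => tsub_le_tsub_right h c) (ENNReal.top_sub hc)

theorem LambdaStar_eq_iInf_max {F : Measure ℝ} [IsProbabilityMeasure F] (hF : F (Iio 0) = 0)
    {p : ℝ → ℝ → ℝ} (hA1 : AssumptionA1 p) {P1 : ℝ} (hA2 : AssumptionA2 F p P1)
    {lam q k : ℝ} (hlam : 0 < lam) (hq : 0 < q) {x : ℝ} (hx : x ≤ 0) :
    LambdaStar F p lam q k x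
      = ⨅ (φ : ℝ → ℝ) (_ : memF F p lam q k φ), ENNReal.ofReal (max (φ 0 + k * x) 0) := by
  refine le_antisymm (le_iInf₂ fun φ hφ => ENNReal.le_of_forall_pos_le_add fun ε hε _ => ?_)
    (iInf₂_mono fun φ hφ => ENNReal.ofReal_le_ofReal (hφ.max_add_mul_le hx))
  obtain ⟨ψ, hψ, hψ_le⟩ := hφ.exists_memF_le_max hF hA1 hA2 hlam hq hε
  calc LambdaStar F p lam q k x ≤ ENNReal.ofReal (ψ x) := iInf₂_le ψ hψ
    _ ≤ ENNReal.ofReal (max (φ 0 + k * x) 0 + ε) := ENNReal.ofReal_le_ofReal (hψ_le x hx)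
    _ = ENNReal.ofReal (max (φ 0 + k * x) 0) + ε := by
      rw [ENNReal.ofReal_add (le_max_right _ _) ε.coe_nonneg, ENNReal.ofReal_coe_nnreal]

theorem dual_value_negative_axis_general
    (F : Measure ℝ) [IsProbabilityMeasure F] (hF : F (Iio 0) = 0)
    (p : ℝ → ℝ → ℝ) (P1 : ℝ) (hA1 : AssumptionA1 p) (hA2 : AssumptionA2 F p P1)
    (lam q k : ℝ) (hlam : 0 < lam) (hq : P1 < q) (hk : 1 < k)
    (x : ℝ) (hx : x < 0) :
    LambdaStar F p lam q k x
      = LambdaStar F p lam q k 0 - ENNReal.ofReal (k * (-x)) := by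
  have hkx : 0 ≤ k * -x := mul_nonneg (by linarith) (by linarith)
  have hshift (a : ℝ) :
      ENNReal.ofReal (max (a + k * x) 0) = ENNReal.ofReal a - ENNReal.ofReal (k * -x) := by
    rw [← ENNReal.ofReal_sub _ hkx, ENNReal.ofReal_max, ENNReal.ofReal_zero, max_eq_left (by simp)]
    ring_nf
  rw [LambdaStar_eq_iInf_max hF hA1 hA2 hlam (hA2.2.2.2.1.trans_lt hq) hx.le, LambdaStar]
  simp only [hshift, ENNReal.iInf_sub _ ENNReal.ofReal_ne_top]

/-- Proposition 5.1, part 2.  The dual value extends to the negative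
semi-axis by `Λ*(x) = max{Λ*(0) + k·x, 0}` for every `x < 0`; in `[0,∞]` this reads
`Λ*(x) = Λ*(0) − k·(−x)` with truncated subtraction. -/
theorem dual_value_negative_axis
    (F : Measure ℝ) [IsProbabilityMeasure F] (hF : F (Iio 0) = 0)
    (hmean : Integrable (fun y : ℝ => y) F)
    (p : ℝ → ℝ → ℝ) (P1 : ℝ) (hA1 : AssumptionA1 p) (hA2 : AssumptionA2 F p P1)
    (lam q k : ℝ) (hlam : 0 < lam) (hq : P1 < q) (hk : 1 < k)
    (x : ℝ) (hx : x < 0) :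
    LambdaStar F p lam q k x
      = LambdaStar F p lam q k 0 - ENNReal.ofReal (k * (-x)) :=
  dual_value_negative_axis_general F hF p P1 hA1 hA2 lam q k hlam hq hk x hx
end
end
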